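/- arXiv:2601.13494 — 8 statements merged into one kernel-verified Lean document; each statement's English description precedes it below -/
import Mathlib

section
/- For every deterministic online algorithm P for the online traveling repairperson problem on the half-line (i.e., every function P assigning to each finite list σ of requests and each t ∈ ℕ a position P σ t ∈ [0,∞) satisfying the start, unit-speed and causality conditions), there exist a finite list σ of requests with locations in [0,10] and arrival times in ℕ, and a request (l, s) ∈ σ, whose completion time inf{u ≥ s : P̄ σ u = l} is strictly greater than 3·max{l, s}. Moreover, the multiset of request locations can be fixed in advance independently of P: there exist 11 locations, eight of them being 1, 4, 5, 6, 7, 8, 9, 10 and three of them lying in the open interval (0,1), such that for every algorithm P there is an assignment of arrival times in ℕ to these 11 locations producing such a violating request. In particular, no deterministic online algorithm is 3-competitive for the online traveling repairperson problem on a line, even in the prediction model with perfect predictions. -/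
open scoped ENNReal

/-- Linear interpolation of an integer-time trajectory `g : ℕ → ℝ` to real
times: for `u ≥ 0`, `interp g u` moves linearly from `g ⌊u⌋` to `g (⌊u⌋+1)`. -/
noncomputable def interp (g : ℕ → ℝ) (u : ℝ) : ℝ :=
  g ⌊u⌋₊ + (u - (⌊u⌋₊ : ℝ)) * (g (⌊u⌋₊ + 1) - g ⌊u⌋₊)

/-- Causality of an online algorithm `P` (a request is a location–arrival-time
pair `(l, s) : ℝ × ℕ`): if two request lists contain exactly the same requests
with arrival time `≤ t`, as multisets, then the positions prescribed by `P`
agree at all integer times `u ≤ t + 1`. -/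
def Causal (P : List (ℝ × ℕ) → ℕ → ℝ) : Prop :=
  ∀ (σ σ' : List (ℝ × ℕ)) (t : ℕ),
    (↑(σ.filter fun r => decide (r.2 ≤ t)) : Multiset (ℝ × ℕ)) =
      (↑(σ'.filter fun r => decide (r.2 ≤ t)) : Multiset (ℝ × ℕ)) →
    ∀ u : ℕ, u ≤ t + 1 → P σ u = P σ' u

/-- The completion time (as an element of `[0, ∞]`, so `⊤` if never served) of
a request at location `l` with arrival time `s` under the interpolated
trajectory of `P` on request list `σ`: `inf {u ≥ s : P̄ σ u = l}`. -/
noncomputable def completionTime (P : List (ℝ × ℕ) → ℕ → ℝ)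
    (σ : List (ℝ × ℕ)) (l : ℝ) (s : ℕ) : ℝ≥0∞ :=
  sInf {c : ℝ≥0∞ | ∃ u : ℝ, (s : ℝ) ≤ u ∧ interp (P σ) u = l ∧
    c = ENNReal.ofReal u}

/-!
Requests at `1, 4, 5, …, 10` are released at time `0`. The trap: if the server has not reached
`k` by time `t` and stands at `p`, release a recall request at `ε = 1/100` at time `t`. It must be
served in `[t, 3t]` and each `l ∈ {k, …, 10}` at some time in `(t, 3l]`; since the server moves at
unit speed, this is impossible once `2k + 2ε < t + p`, `p + 2 + 2ε < t` and `2t + p < 20 - ε`.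

If the server is at least `1 - ε` away at time `2`, a recall is released at time `2`; if it is
not, but is within `2ε` of the origin at time `3`, nothing is released. Either way it is back near
the origin at some time in `(2 + 2ε, 6]`, so if it reaches `4` by time `7`, it is near `4` at time
`7` without having reached `5`, and the trap closes at `t = 7` with `k = 5`. Otherwise `4` is
unreached at time `7` (in the remaining case a recall released at time `3` ensures this), and the
trap closes with `k = 4` at time `7`, `8` or `9`, according to the positions at times `7` and `8`.
-/

open Set

section Trajectory

variable {g : ℕ → ℝ}

@[simp]
theorem interp_natCast (g : ℕ → ℝ) (n : ℕ) : interp g n = g n := by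
  simp [interp]

@[simp]
theorem interp_zero (g : ℕ → ℝ) : interp g 0 = g 0 := by
  simpa using interp_natCast g 0

@[simp]
theorem interp_ofNat (g : ℕ → ℝ) (n : ℕ) [n.AtLeastTwo] :
    interp g (no_index (OfNat.ofNat n)) = g (OfNat.ofNat n) :=
  interp_natCast g n

theorem interp_eq_of_mem_Icc (g : ℕ → ℝ) {n : ℕ} {u : ℝ} (hu : u ∈ Icc (n : ℝ) (n + 1)) :
    interp g u = g n + (u - n) * (g (n + 1) - g n) := by
  rcases hu.2.eq_or_lt with rfl | hlt
  · have := interp_natCast g (n + 1)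
    push_cast at this
    rw [this]
    ring
  · have : ⌊u⌋₊ = n := (Nat.floor_eq_iff ((Nat.cast_nonneg n).trans hu.1)).2 ⟨hu.1, hlt⟩
    simp [interp, this]

theorem abs_sub_le_of_abs_succ_sub_le (hstep : ∀ t, |g (t + 1) - g t| ≤ 1) {a b : ℕ}
    (hab : a ≤ b) : |g b - g a| ≤ b - a := by
  have := dist_le_Ico_sum_of_dist_le (f := g) (d := fun _ ↦ 1) hab
    fun _ _ ↦ by rw [dist_comm]; exact hstep _
  simpa [Real.dist_eq, abs_sub_comm, Nat.cast_sub hab] using this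

theorem abs_interp_sub_le_of_mem_Icc (hstep : ∀ t, |g (t + 1) - g t| ≤ 1) {n : ℕ} {u v : ℝ}
    (hu : u ∈ Icc (n : ℝ) (n + 1)) (hv : v ∈ Icc (n : ℝ) (n + 1)) :
    |interp g v - interp g u| ≤ |v - u| := by
  rw [interp_eq_of_mem_Icc g hv, interp_eq_of_mem_Icc g hu,
    show ∀ a b : ℝ, a + (v - n) * b - (a + (u - n) * b) = (v - u) * b by intros; ring, abs_mul]
  exact mul_le_of_le_one_right (abs_nonneg _) (hstep n)

theorem abs_interp_sub_le (hstep : ∀ t, |g (t + 1) - g t| ≤ 1) {u v : ℝ} (hu : 0 ≤ u)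
    (huv : u ≤ v) : |interp g v - interp g u| ≤ v - u := by
  have hu' : u ∈ Icc (⌊u⌋₊ : ℝ) (⌊u⌋₊ + 1) := ⟨Nat.floor_le hu, (Nat.lt_floor_add_one u).le⟩
  have hv' : v ∈ Icc (⌊v⌋₊ : ℝ) (⌊v⌋₊ + 1) :=
    ⟨Nat.floor_le (hu.trans huv), (Nat.lt_floor_add_one v).le⟩
  rcases (Nat.floor_mono huv).eq_or_lt with heq | hlt
  · rw [← heq] at hv'
    simpa [abs_of_nonneg (sub_nonneg.2 huv)] using abs_interp_sub_le_of_mem_Icc hstep hu' hv'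
  · have h₁ : |g (⌊u⌋₊ + 1) - interp g u| ≤ ⌊u⌋₊ + 1 - u := by
      have := abs_interp_sub_le_of_mem_Icc hstep hu' (v := ((⌊u⌋₊ + 1 : ℕ) : ℝ))
        ⟨by push_cast; linarith [hu'.1], by push_cast; rfl⟩
      rwa [interp_natCast, Nat.cast_succ, abs_of_nonneg (sub_nonneg.2 hu'.2)] at this
    have h₂ : |g ⌊v⌋₊ - g (⌊u⌋₊ + 1)| ≤ ⌊v⌋₊ - (⌊u⌋₊ + 1) := by
      simpa using abs_sub_le_of_abs_succ_sub_le hstep hlt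
    have h₃ : |interp g v - g ⌊v⌋₊| ≤ v - ⌊v⌋₊ := by
      have := abs_interp_sub_le_of_mem_Icc hstep (u := (⌊v⌋₊ : ℝ)) ⟨le_rfl, by linarith⟩ hv'
      rwa [interp_natCast, abs_of_nonneg (sub_nonneg.2 hv'.1)] at this
    linarith [abs_sub_le (interp g v) (g ⌊v⌋₊) (interp g u),
      abs_sub_le (g ⌊v⌋₊) (g (⌊u⌋₊ + 1)) (interp g u)]

theorem lipschitzOnWith_interp (hstep : ∀ t, |g (t + 1) - g t| ≤ 1) :
    LipschitzOnWith 1 (interp g) (Ici 0) := by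
  refine LipschitzOnWith.of_dist_le_mul fun u hu v hv ↦ ?_
  rw [Real.dist_eq, Real.dist_eq, NNReal.coe_one, one_mul]
  rcases le_total u v with h | h
  · rw [abs_sub_comm, abs_sub_comm u]
    exact (abs_interp_sub_le hstep hu h).trans (le_abs_self _)
  · exact (abs_interp_sub_le hstep hv h).trans (le_abs_self _)

theorem interp_congr {g' : ℕ → ℝ} {N : ℕ} (h : ∀ n ≤ N, g n = g' n) {u : ℝ} (hu₀ : 0 ≤ u)
    (hu : u ≤ N) : interp g u = interp g' u := by
  rcases hu.eq_or_lt with rfl | hlt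
  · simp [h N le_rfl]
  · have : ⌊u⌋₊ < N := (Nat.floor_lt hu₀).2 hlt
    simp only [interp, h _ this.le, h _ this]

end Trajectory

section Paths

variable {x : ℝ → ℝ}

theorem abs_sub_le_of_lipschitzOnWith (hx : LipschitzOnWith 1 x (Ici 0)) {u v : ℝ}
    (hu : 0 ≤ u) (huv : u ≤ v) : |x v - x u| ≤ v - u := by
  have := hx.dist_le_mul v (hu.trans huv) u hu
  rwa [Real.dist_eq, Real.dist_eq, NNReal.coe_one, one_mul,
    abs_of_nonneg (sub_nonneg.2 huv)] at this

theorem le_self_of_lipschitzOnWith (hx : LipschitzOnWith 1 x (Ici 0)) (hx₀ : x 0 = 0) {u : ℝ}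
    (hu : 0 ≤ u) : x u ≤ u := by
  have := abs_le.1 (abs_sub_le_of_lipschitzOnWith hx le_rfl hu)
  linarith [this.2]

theorem forall_lt_of_forall_ne (hx : LipschitzOnWith 1 x (Ici 0)) {c T : ℝ} (hx₀ : x 0 < c)
    (hne : ∀ u, 0 ≤ u → u ≤ T → x u ≠ c) : ∀ u, 0 ≤ u → u ≤ T → x u < c := by
  intro u hu huT
  by_contra! hcu
  obtain ⟨v, hv, hxv⟩ := intermediate_value_Icc hu
    (hx.continuousOn.mono Icc_subset_Ici_self) ⟨hx₀.le, hcu⟩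
  exact hne v hv.1 (hv.2.trans huT) hxv

theorem forall_lt_extend (hx : LipschitzOnWith 1 x (Ici 0)) {a b c : ℝ} (ha : 0 ≤ a)
    (hlow : ∀ u, 0 ≤ u → u ≤ a → x u < c) (hgap : x a + (b - a) < c) :
    ∀ u, 0 ≤ u → u ≤ b → x u < c := by
  intro u hu hub
  rcases le_total u a with h | h
  · exact hlow u hu h
  · linarith [(abs_le.1 (abs_sub_le_of_lipschitzOnWith hx ha h)).2]

end Paths

section Ladder

variable {x : ℝ → ℝ}

/- Visiting `ε` before `k`, after `N`, or between some `m` and `m + 1` contradicts `h_first`,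
`h_last` or `h_mid` respectively. -/
theorem ladder_infeasible (hx : LipschitzOnWith 1 x (Ici 0)) {k N : ℕ} (hkN : k ≤ N)
    {t ε : ℝ} (ht : 0 ≤ t) (hlow : ∀ u, 0 ≤ u → u ≤ t → x u < k)
    (h_first : 2 * k + 2 * ε < t + x t) (h_mid : x t + 2 + 2 * ε < t)
    (h_last : 2 * t + x t < 2 * N - ε)
    (hrecall : ∃ u : ℝ, t ≤ u ∧ u ≤ 3 * t ∧ x u = ε)
    (hladder : ∀ l : ℕ, k ≤ l → l ≤ N → ∃ u : ℝ, 0 ≤ u ∧ u ≤ 3 * l ∧ x u = l) : False := by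
  obtain ⟨w, hw_ge, hw_le, hxw⟩ := hrecall
  choose! v hv₀ hv_le hxv using hladder
  have hw₀ : 0 ≤ w := ht.trans hw_ge
  have travel := fun a b (ha : 0 ≤ a) (hab : a ≤ b) ↦
    abs_le.1 (abs_sub_le_of_lipschitzOnWith hx ha hab)
  have recall_late : t + (x t - ε) ≤ w := by
    have := travel t w ht hw_ge
    rw [hxw] at this
    linarith [this.1]
  have ladder_late : ∀ l, k ≤ l → l ≤ N → t + (l - x t) ≤ v l := by
    intro l hkl hlN
    have htv : t ≤ v l := by
      by_contra! h
      have := hlow _ (hv₀ l hkl hlN) h.le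
      rw [hxv l hkl hlN, Nat.cast_lt] at this
      omega
    have := travel t (v l) ht htv
    rw [hxv l hkl hlN] at this
    linarith [this.2]
  have ladder_after_recall : ∀ l, k ≤ l → l ≤ N → w ≤ v l → w + (l - ε) ≤ v l := by
    intro l hkl hlN hwv
    have := travel w (v l) hw₀ hwv
    rw [hxv l hkl hlN, hxw] at this
    linarith [this.2]
  have recall_after_ladder : ∀ l, k ≤ l → l ≤ N → v l ≤ w → v l + (l - ε) ≤ w := by
    intro l hkl hlN hvw
    have := travel (v l) w (hv₀ l hkl hlN) hvw
    rw [hxv l hkl hlN, hxw] at this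
    linarith [this.1]
  have recall_first : w ≤ v k := by
    refine Nat.decreasingInduction' (P := fun l ↦ w ≤ v l) (fun l hlN hkl hnext ↦ ?_) hkN ?_
    · by_contra! h
      have h₁ := ladder_late l hkl hlN.le
      have h₂ := recall_after_ladder l hkl hlN.le h.le
      have h₃ := ladder_after_recall (l + 1) (by omega) hlN hnext
      have h₄ := hv_le (l + 1) (by omega) hlN
      push_cast at h₃ h₄
      linarith
    · by_contra! h
      linarith [ladder_late N hkN le_rfl, recall_after_ladder N hkN le_rfl h.le]
  linarith [ladder_after_recall k le_rfl hkN recall_first, hv_le k le_rfl hkN]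

theorem five_unreached_of_return (hx : LipschitzOnWith 1 x (Ici 0)) (hx₀ : x 0 = 0)
    {τ w : ℝ} (hτ₀ : 0 ≤ τ) (hτ : τ ≤ 6) (hxτ : x τ ≤ 1 / 50) (hτx : 2 + 1 / 50 < τ - x τ)
    (hw₀ : 0 ≤ w) (hw : w ≤ 7) (hxw : x w = 4) :
    (∀ u, 0 ≤ u → u ≤ 7 → x u < 5) ∧ 3 + 1 / 50 < x 7 ∧ x 7 < 5 - 1 / 50 := by
  have travel := fun a b (ha : 0 ≤ a) (hab : a ≤ b) ↦
    abs_le.1 (abs_sub_le_of_lipschitzOnWith hx ha hab)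
  have hw4 : 4 ≤ w := hxw ▸ le_self_of_lipschitzOnWith hx hx₀ hw₀
  have hτw : τ < w := by
    by_contra! h
    have := travel w τ hw₀ h
    rw [hxw] at this
    linarith [this.1]
  have h₁ := travel τ w hτ₀ hτw.le
  have h₂ := travel w 7 hw₀ hw
  have h₃ := travel τ 7 hτ₀ (by linarith)
  rw [hxw] at h₁ h₂
  refine ⟨forall_lt_of_forall_ne hx (by rw [hx₀]; norm_num) fun u hu₀ hu hxu ↦ ?_,
    by linarith [h₁.2, h₂.1], by linarith [h₃.2]⟩
  have hu5 : 5 ≤ u := hxu ▸ le_self_of_lipschitzOnWith hx hx₀ hu₀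
  rcases le_total u τ with h | h
  · linarith [(travel u τ hu₀ h).1]
  · linarith [(travel τ u hτ₀ h).2]

theorem four_unreached_of_recall (hx : LipschitzOnWith 1 x (Ici 0)) (hx₀ : x 0 = 0)
    (h₃_lo : 1 / 50 < x 3) (h₃_hi : x 3 < 2 - 1 / 100) {w : ℝ} (hw_ge : 3 ≤ w) (hw_le : w ≤ 9)
    (hxw : x w = 1 / 100) : ∀ u, 0 ≤ u → u ≤ 7 → x u ≠ 4 := by
  have travel := fun a b (ha : 0 ≤ a) (hab : a ≤ b) ↦
    abs_le.1 (abs_sub_le_of_lipschitzOnWith hx ha hab)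
  intro u hu₀ hu hxu
  have hu4 : 4 ≤ u := hxu ▸ le_self_of_lipschitzOnWith hx hx₀ hu₀
  have h₁ := travel 3 w (by norm_num) hw_ge
  rw [hxw] at h₁
  rcases le_total u w with h | h
  · have h₂ := travel 3 u (by norm_num) (by linarith)
    have h₃ := travel u w hu₀ h
    rw [hxu] at h₂ h₃
    rw [hxw] at h₃
    linarith [h₂.2, h₃.1]
  · have h₂ := travel w u (by linarith) h
    rw [hxu, hxw] at h₂
    linarith [h₁.1, h₂.2]

end Ladder

section Requests

variable {P : List (ℝ × ℕ) → ℕ → ℝ} {σ : List (ℝ × ℕ)}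

/-- For `c = 3`, the requirement of `3`-competitiveness measured against the lower bound
`max l s` on the optimal completion time of a request `(l, s)`. -/
def ServesWithin (c : ℝ) (P : List (ℝ × ℕ) → ℕ → ℝ) (σ : List (ℝ × ℕ)) : Prop :=
  ∀ r ∈ σ, completionTime P σ r.1 r.2 ≤ ENNReal.ofReal (c * max r.1 r.2)

theorem exists_visit_of_completionTime_le (hstep : ∀ t, |P σ (t + 1) - P σ t| ≤ 1) {l B : ℝ}
    {s : ℕ} (hsB : s ≤ B) (h : completionTime P σ l s ≤ ENNReal.ofReal B) :
    ∃ u : ℝ, s ≤ u ∧ u ≤ B ∧ interp (P σ) u = l := by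
  set V := {u : ℝ | (s : ℝ) ≤ u ∧ interp (P σ) u = l}
  have hV : V.Nonempty := by
    by_contra! hV
    have : completionTime P σ l s = ⊤ := by
      refine sInf_eq_top.2 ?_
      rintro _ ⟨u, hsu, hu, rfl⟩
      exact absurd ⟨hsu, hu⟩ (hV.subset · |>.elim)
    exact ENNReal.ofReal_ne_top (top_le_iff.1 (this ▸ h))
  have hVc : IsClosed V :=
    ((lipschitzOnWith_interp hstep).continuousOn.mono (Ici_subset_Ici.2 s.cast_nonneg))
      |>.preimage_isClosed_of_isClosed isClosed_Ici isClosed_singleton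
  have hbdd : BddBelow V := ⟨s, fun u hu ↦ hu.1⟩
  obtain ⟨hs, hl⟩ := hVc.csInf_mem hV hbdd
  refine ⟨sInf V, hs, ?_, hl⟩
  have : ENNReal.ofReal (sInf V) ≤ completionTime P σ l s := by
    refine le_sInf ?_
    rintro _ ⟨u, hsu, hu, rfl⟩
    exact ENNReal.ofReal_le_ofReal (csInf_le hbdd ⟨hsu, hu⟩)
  exact (ENNReal.ofReal_le_ofReal_iff ((s.cast_nonneg).trans hsB)).1 (this.trans h)

theorem ServesWithin.exists_visit {c : ℝ} (hσ : ServesWithin c P σ)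
    (hstep : ∀ t, |P σ (t + 1) - P σ t| ≤ 1) (hc : 1 ≤ c) {l : ℝ} {s : ℕ} (hr : (l, s) ∈ σ) :
    ∃ u : ℝ, s ≤ u ∧ u ≤ c * max l s ∧ interp (P σ) u = l :=
  exists_visit_of_completionTime_le hstep
    ((le_max_right l s).trans
      (le_mul_of_one_le_left ((s.cast_nonneg).trans (le_max_right _ _)) hc))
    (hσ _ hr)

theorem Causal.apply_append (hP : Causal P) {rest : List (ℝ × ℕ)} {t : ℕ}
    (hrest : ∀ r ∈ rest, t < r.2) {n : ℕ} (hn : n ≤ t + 1) : P (σ ++ rest) n = P σ n := by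
  refine hP _ _ t ?_ n hn
  rw [List.filter_append,
    List.filter_eq_nil_iff (l := rest) |>.2 fun r hr ↦ by simpa using hrest r hr, List.append_nil]

theorem Causal.interp_append (hP : Causal P) {rest : List (ℝ × ℕ)} {t : ℕ}
    (hrest : ∀ r ∈ rest, t < r.2) {u : ℝ} (hu₀ : 0 ≤ u) (hu : u ≤ t + 1) :
    interp (P (σ ++ rest)) u = interp (P σ) u :=
  interp_congr (fun _ hn ↦ hP.apply_append hrest hn) hu₀ (by exact_mod_cast hu)

theorem not_servesWithin_of_recall (hstep : ∀ t, |P σ (t + 1) - P σ t| ≤ 1) {k N t : ℕ}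
    {ε : ℝ} (hkN : k ≤ N) (hεt : ε ≤ t) (hrecall : (ε, t) ∈ σ)
    (hladder : ∀ l : ℕ, k ≤ l → l ≤ N → ((l : ℝ), 0) ∈ σ)
    (hlow : ∀ u : ℝ, 0 ≤ u → u ≤ t → interp (P σ) u < k)
    (h_first : 2 * k + 2 * ε < t + P σ t) (h_mid : P σ t + 2 + 2 * ε < t)
    (h_last : 2 * t + P σ t < 2 * N - ε) : ¬ ServesWithin 3 P σ := by
  intro hσ
  refine ladder_infeasible (lipschitzOnWith_interp hstep) hkN t.cast_nonneg hlow
    (by rwa [interp_natCast]) (by rwa [interp_natCast]) (by rwa [interp_natCast]) ?_ ?_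
  · obtain ⟨u, hu₁, hu₂, hu₃⟩ := hσ.exists_visit hstep (by norm_num) hrecall
    exact ⟨u, hu₁, by rwa [max_eq_right hεt] at hu₂, hu₃⟩
  · intro l hkl hlN
    obtain ⟨u, hu₁, hu₂, hu₃⟩ := hσ.exists_visit hstep (by norm_num) (hladder l hkl hlN)
    exact ⟨u, by simpa using hu₁, by simpa using hu₂, hu₃⟩

end Requests

section Adversary

variable {P : List (ℝ × ℕ) → ℕ → ℝ}

def initialRequests : List (ℝ × ℕ) :=
  [(1, 0), (4, 0), (5, 0), (6, 0), (7, 0), (8, 0), (9, 0), (10, 0)]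

/-- The adversary's request lists: the initial requests and three recall requests at `1/100`
released at times `a`, `b`, `c`; a release at time `40` only pads the list to its fixed size. -/
noncomputable def requests (a b c : ℕ) : List (ℝ × ℕ) :=
  initialRequests ++ [(1 / 100, a), (1 / 100, b), (1 / 100, c)]

theorem ladder_mem_initialRequests {l : ℕ} (h4 : 4 ≤ l) (h10 : l ≤ 10) :
    ((l : ℝ), 0) ∈ initialRequests := by
  interval_cases l <;> simp [initialRequests]

theorem not_servesWithin_of_return {σ : List (ℝ × ℕ)} (h0 : P σ 0 = 0)
    (hstep : ∀ t, |P σ (t + 1) - P σ t| ≤ 1) (hrecall : ((1 / 100 : ℝ), 7) ∈ σ)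
    (hladder : ∀ l : ℕ, 5 ≤ l → l ≤ 10 → ((l : ℝ), 0) ∈ σ) {τ w : ℝ} (hτ₀ : 0 ≤ τ) (hτ : τ ≤ 6)
    (hxτ : interp (P σ) τ ≤ 1 / 50) (hτx : 2 + 1 / 50 < τ - interp (P σ) τ)
    (hw₀ : 0 ≤ w) (hw : w ≤ 7) (hxw : interp (P σ) w = 4) : ¬ ServesWithin 3 P σ := by
  have hx₀ : interp (P σ) 0 = 0 := by simp [h0]
  obtain ⟨hlow, h_lo, h_hi⟩ :=
    five_unreached_of_return (lipschitzOnWith_interp hstep) hx₀ hτ₀ hτ hxτ hτx hw₀ hw hxw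
  have h₇ : interp (P σ) 7 = P σ 7 := interp_ofNat _ 7
  refine not_servesWithin_of_recall hstep (k := 5) (N := 10) (t := 7) (by norm_num)
    (by norm_num) hrecall hladder (by exact_mod_cast hlow) ?_ ?_ ?_ <;> push_cast <;> linarith

theorem exists_not_servesWithin_of_four_unreached (h0 : ∀ σ, P σ 0 = 0)
    (hpos : ∀ σ t, 0 ≤ P σ t) (hstep : ∀ σ t, |P σ (t + 1) - P σ t| ≤ 1)
    (σ : ℕ → List (ℝ × ℕ)) (g : ℕ → ℝ) (hagree : ∀ j, 7 ≤ j → j ≤ 9 → ∀ n ≤ j, P (σ j) n = g n)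
    (hrecall : ∀ j, ((1 / 100 : ℝ), j) ∈ σ j)
    (hladder : ∀ j l : ℕ, 4 ≤ l → l ≤ 10 → ((l : ℝ), 0) ∈ σ j)
    (hfour : ∀ j, 7 ≤ j → j ≤ 9 → ServesWithin 3 P (σ j) →
      ∀ u : ℝ, 0 ≤ u → u ≤ 7 → interp (P (σ j)) u ≠ 4) :
    ∃ j, ¬ ServesWithin 3 P (σ j) := by
  have hx := fun j ↦ lipschitzOnWith_interp (hstep (σ j))
  have low : ∀ j, 7 ≤ j → j ≤ 9 → ServesWithin 3 P (σ j) →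
      ∀ u : ℝ, 0 ≤ u → u ≤ 7 → interp (P (σ j)) u < 4 := fun j h7 h9 hS ↦
    forall_lt_of_forall_ne (hx j) (by simp [h0]) (hfour j h7 h9 hS)
  have step := fun σ t ↦ (abs_le.1 (hstep σ t)).2
  have trap := fun j (hj : 7 ≤ j) hlow ↦ not_servesWithin_of_recall (hstep (σ j)) (k := 4)
    (N := 10) (t := j) (by norm_num) (by linarith [show (7 : ℝ) ≤ j by exact_mod_cast hj])
    (hrecall j) (hladder j) hlow
  by_cases h7 : 1 + 1 / 50 < g 7
  · refine ⟨7, fun hS ↦ ?_⟩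
    have hlow := low 7 le_rfl (by norm_num) hS
    have hx₇ : P (σ 7) 7 < 4 := by simpa using hlow 7 (by norm_num) le_rfl
    have hg₇ := hagree 7 le_rfl (by norm_num) 7 le_rfl
    refine trap 7 le_rfl (by exact_mod_cast hlow) ?_ ?_ ?_ hS <;> push_cast <;> linarith
  by_cases h8 : 1 / 50 < g 8
  · refine ⟨8, fun hS ↦ ?_⟩
    have hg₇ := hagree 8 (by norm_num) (by norm_num) 7 (by norm_num)
    have hg₈ := hagree 8 (by norm_num) (by norm_num) 8 le_rfl
    have hlow := forall_lt_extend (hx 8) (a := 7) (b := 8) (by norm_num)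
      (low 8 (by norm_num) (by norm_num) hS) (by rw [interp_ofNat, hg₇]; linarith)
    have := step (σ 8) 7
    refine trap 8 (by norm_num) (by exact_mod_cast hlow) ?_ ?_ ?_ hS <;> push_cast <;> linarith
  · refine ⟨9, fun hS ↦ ?_⟩
    have hg₇ := hagree 9 (by norm_num) (by norm_num) 7 (by norm_num)
    have hg₈ := hagree 9 (by norm_num) (by norm_num) 8 (by norm_num)
    have hlow := forall_lt_extend (hx 9) (a := 7) (b := 9) (by norm_num)
      (low 9 (by norm_num) (by norm_num) hS) (by rw [interp_ofNat, hg₇]; linarith)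
    have := step (σ 9) 8
    have := hpos (σ 9) 9
    refine trap 9 (by norm_num) (by exact_mod_cast hlow) ?_ ?_ ?_ hS <;> push_cast <;> linarith

theorem exists_not_servesWithin_append_of_four_unreached (h0 : ∀ σ, P σ 0 = 0)
    (hpos : ∀ σ t, 0 ≤ P σ t) (hstep : ∀ σ t, |P σ (t + 1) - P σ t| ≤ 1) (hP : Causal P)
    {σ₀ pad : List (ℝ × ℕ)} (hladder : ∀ l : ℕ, 4 ≤ l → l ≤ 10 → ((l : ℝ), 0) ∈ σ₀)
    (hpad : ∀ r ∈ pad, 9 ≤ r.2) (hfour : ∀ u : ℝ, 0 ≤ u → u ≤ 7 → interp (P σ₀) u ≠ 4) :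
    ∃ j, ¬ ServesWithin 3 P (σ₀ ++ (1 / 100, j) :: pad) := by
  have hlate : ∀ j t, t < j → t < 9 → ∀ r ∈ (((1 : ℝ) / 100, j) :: pad), t < r.2 := by
    intro j t hj h9 r hr
    rcases List.mem_cons.1 hr with rfl | hr
    · exact hj
    · exact h9.trans_le (hpad r hr)
  refine exists_not_servesWithin_of_four_unreached h0 hpos hstep _ (P σ₀)
    (fun j h7 h9 n hn ↦ hP.apply_append (hlate j (j - 1) (by omega) (by omega)) (by omega))
    (fun j ↦ by simp) (fun j l h4 h10 ↦ List.mem_append_left _ (hladder l h4 h10))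
    fun j h7 _ _ u hu₀ hu hxu ↦ hfour u hu₀ hu ?_
  rwa [← hP.interp_append (hlate j 6 (by omega) (by norm_num)) hu₀ (by norm_num [hu])]

theorem not_servesWithin_requests_two_seven (h0 : ∀ σ, P σ 0 = 0)
    (hstep : ∀ σ t, |P σ (t + 1) - P σ t| ≤ 1) (hP : Causal P)
    (hhigh : 1 - 1 / 100 ≤ P initialRequests 2)
    (hreach : ∃ w : ℝ, 0 ≤ w ∧ w ≤ 7 ∧ interp (P (initialRequests ++ [(1 / 100, 2)])) w = 4) :
    ¬ ServesWithin 3 P (requests 2 7 40) := by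
  intro hS
  obtain ⟨w, hw₀, hw, hxw⟩ := hreach
  have hx₂ : interp (P (requests 2 7 40)) 2 = P initialRequests 2 := by
    rw [interp_ofNat]
    exact hP.apply_append (t := 1) (by simp) le_rfl
  obtain ⟨τ, hτ₂, hτ₆, hxτ⟩ :=
    hS.exists_visit (hstep _) (by norm_num) (l := 1 / 100) (s := 2) (by simp [requests])
  norm_num at hτ₂ hτ₆
  have h₂τ := abs_le.1 (abs_sub_le_of_lipschitzOnWith
    (lipschitzOnWith_interp (hstep (requests 2 7 40))) (by norm_num) hτ₂)
  rw [hx₂, hxτ] at h₂τ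
  refine not_servesWithin_of_return (σ := requests 2 7 40) (h0 _) (hstep _) (by simp [requests])
    (fun l h5 h10 ↦ List.mem_append_left _ (ladder_mem_initialRequests (by omega) h10))
    (by linarith) hτ₆ (by rw [hxτ]; norm_num) (by rw [hxτ]; linarith [h₂τ.1]) hw₀ hw ?_ hS
  rw [show requests 2 7 40 = (initialRequests ++ [(1 / 100, 2)]) ++ [(1 / 100, 7), (1 / 100, 40)]
    by simp [requests], hP.interp_append (t := 6) (by simp) hw₀ (by norm_num [hw])]
  exact hxw

theorem not_servesWithin_requests_seven (h0 : ∀ σ, P σ 0 = 0)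
    (hstep : ∀ σ t, |P σ (t + 1) - P σ t| ≤ 1) (hP : Causal P)
    (hlow : P initialRequests 3 ≤ 1 / 50)
    (hreach : ∃ w : ℝ, 0 ≤ w ∧ w ≤ 7 ∧ interp (P initialRequests) w = 4) :
    ¬ ServesWithin 3 P (requests 7 40 40) := by
  obtain ⟨w, hw₀, hw, hxw⟩ := hreach
  have hx₃ : interp (P (requests 7 40 40)) 3 = P initialRequests 3 := by
    rw [interp_ofNat]
    exact hP.apply_append (t := 6) (by simp) (by norm_num)
  refine not_servesWithin_of_return (h0 _) (hstep _) (by simp [requests])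
    (fun l h5 h10 ↦ List.mem_append_left _ (ladder_mem_initialRequests (by omega) h10))
    (τ := 3) (by norm_num) (by norm_num) (by rwa [hx₃]) (by rw [hx₃]; linarith) hw₀ hw ?_
  rwa [requests, hP.interp_append (t := 6) (by simp) hw₀ (by norm_num [hw])]

theorem exists_not_servesWithin_requests_three (h0 : ∀ σ, P σ 0 = 0)
    (hpos : ∀ σ t, 0 ≤ P σ t) (hstep : ∀ σ t, |P σ (t + 1) - P σ t| ≤ 1) (hP : Causal P)
    (hlow : P initialRequests 2 < 1 - 1 / 100) (hhigh : 1 / 50 < P initialRequests 3) :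
    ∃ j, ¬ ServesWithin 3 P (requests 3 j 40) := by
  have hσ : ∀ j, requests 3 j 40 =
      (initialRequests ++ [(1 / 100, 3)]) ++ [(1 / 100, j), (1 / 100, 40)] := by
    simp [requests]
  refine exists_not_servesWithin_of_four_unreached h0 hpos hstep (fun j ↦ requests 3 j 40)
    (P (initialRequests ++ [(1 / 100, 3)])) ?_ (fun j ↦ by simp [requests])
    (fun j l h4 h10 ↦ List.mem_append_left _ (ladder_mem_initialRequests h4 h10)) ?_
  · intro j h7 h9 n hn
    rw [hσ]
    exact hP.apply_append (t := j - 1)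
      (by simp [show j - 1 < j by omega, show j - 1 < 40 by omega]) (by omega)
  · intro j h7 _ hS
    have hx₃ : interp (P (requests 3 j 40)) 3 = P initialRequests 3 := by
      rw [interp_ofNat]
      exact hP.apply_append (t := 2) (by simp [show 2 < j by omega]) le_rfl
    have h₂₃ := (abs_le.1 (hstep initialRequests 2)).2
    obtain ⟨w, hw₃, hw₉, hxw⟩ :=
      hS.exists_visit (hstep _) (by norm_num) (l := 1 / 100) (s := 3) (by simp [requests])
    norm_num at hw₃ hw₉
    exact four_unreached_of_recall (lipschitzOnWith_interp (hstep _)) (by simp [h0])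
      (by rwa [hx₃]) (by rw [hx₃]; linarith) hw₃ hw₉ hxw

theorem exists_not_servesWithin_requests (h0 : ∀ σ, P σ 0 = 0) (hpos : ∀ σ t, 0 ≤ P σ t)
    (hstep : ∀ σ t, |P σ (t + 1) - P σ t| ≤ 1) (hP : Causal P) :
    ∃ a b c, ¬ ServesWithin 3 P (requests a b c) := by
  by_cases hhigh : 1 - 1 / 100 ≤ P initialRequests 2
  · by_cases hreach :
        ∃ w : ℝ, 0 ≤ w ∧ w ≤ 7 ∧ interp (P (initialRequests ++ [(1 / 100, 2)])) w = 4
    · exact ⟨2, 7, 40, not_servesWithin_requests_two_seven h0 hstep hP hhigh hreach⟩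
    · push Not at hreach
      obtain ⟨j, hj⟩ := exists_not_servesWithin_append_of_four_unreached h0 hpos hstep hP
        (fun l h4 h10 ↦ List.mem_append_left _ (ladder_mem_initialRequests h4 h10))
        (pad := [(1 / 100, 40)]) (by simp) hreach
      exact ⟨2, j, 40, by simpa [requests] using hj⟩
  by_cases h₃ : P initialRequests 3 ≤ 1 / 50
  · by_cases hreach : ∃ w : ℝ, 0 ≤ w ∧ w ≤ 7 ∧ interp (P initialRequests) w = 4
    · exact ⟨7, 40, 40, not_servesWithin_requests_seven h0 hstep hP h₃ hreach⟩
    · push Not at hreach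
      obtain ⟨j, hj⟩ := exists_not_servesWithin_append_of_four_unreached h0 hpos hstep hP
        (fun l ↦ ladder_mem_initialRequests) (pad := [(1 / 100, 40), (1 / 100, 40)]) (by simp)
        hreach
      exact ⟨j, 40, 40, hj⟩
  · obtain ⟨j, hj⟩ := exists_not_servesWithin_requests_three h0 hpos hstep hP
      (not_le.1 hhigh) (not_le.1 h₃)
    exact ⟨3, j, 40, hj⟩

end Adversary

/-- no deterministic online algorithm for the online traveling
repairperson problem on the half-line is `3`-competitive.  There are `11`
locations fixed in advance — eight of them `1, 4, 5, 6, 7, 8, 9, 10` and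
three of them in the open interval `(0,1)` — such that for every
deterministic algorithm `P` (a function from request lists and integer times
to positions in `[0,∞)`, starting at the origin, moving at unit speed, and
causal) there is an assignment of arrival times in `ℕ` to these locations,
giving a request list `σ` with locations in `[0,10]`, containing a request
`(l, s)` whose completion time `inf {u ≥ s : P̄ σ u = l}` is strictly greater
than `3 * max l s`. -/
theorem stmt_0 :
    ∃ locs : List ℝ,
      locs.length = 11 ∧
      (∃ eps : List ℝ, eps.length = 3 ∧ (∀ e ∈ eps, 0 < e ∧ e < 1) ∧
        (↑locs : Multiset ℝ) =
          (↑(([1, 4, 5, 6, 7, 8, 9, 10] : List ℝ) ++ eps) : Multiset ℝ)) ∧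
      ∀ P : List (ℝ × ℕ) → ℕ → ℝ,
        (∀ σ, P σ 0 = 0) →
        (∀ σ t, 0 ≤ P σ t) →
        (∀ σ t, |P σ (t + 1) - P σ t| ≤ 1) →
        Causal P →
        ∃ σ : List (ℝ × ℕ),
          (↑(σ.map Prod.fst) : Multiset ℝ) = (↑locs : Multiset ℝ) ∧
          (∀ r ∈ σ, 0 ≤ r.1 ∧ r.1 ≤ 10) ∧
          ∃ r ∈ σ,
            ENNReal.ofReal (3 * max r.1 (r.2 : ℝ)) <
              completionTime P σ r.1 r.2 := by
  refine ⟨[1, 4, 5, 6, 7, 8, 9, 10, 1 / 100, 1 / 100, 1 / 100], rfl,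
    ⟨[1 / 100, 1 / 100, 1 / 100], rfl, by norm_num, rfl⟩, ?_⟩
  intro P h0 hpos hstep hP
  obtain ⟨a, b, c, h⟩ := exists_not_servesWithin_requests h0 hpos hstep hP
  refine ⟨requests a b c, rfl, by norm_num [requests, initialRequests], ?_⟩
  simpa [ServesWithin] using h
end

section
/- For every α > 0, the half-line round-trip trajectory f_α serves every request within factor max{2+2α, (5+6α)/(1+2α)} of the offline optimum: for every location l ∈ [0,∞) and every arrival time t ∈ ℕ, the least s ≥ t with f_α(s) = l exists and satisfies s ≤ max{2+2α, (5+6α)/(1+2α)} · max{l, t}. -/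
/-- `f` is the half-line round-trip trajectory with parameter `α` (with
`β = 2+2α`): `f s = min s (β - s)` on `[0, β]`, and
`f s = min (s - β^j) (β^(j+1) - s)` on `[β^j, β^(j+1)]` for each `j ≥ 1`. -/
def IsRoundTripTraj (α : ℝ) (f : ℝ → ℝ) : Prop :=
  (∀ s : ℝ, 0 ≤ s → s ≤ 2 + 2 * α → f s = min s ((2 + 2 * α) - s)) ∧
  ∀ j : ℕ, 1 ≤ j → ∀ s : ℝ, (2 + 2 * α) ^ j ≤ s → s ≤ (2 + 2 * α) ^ (j + 1) →
    f s = min (s - (2 + 2 * α) ^ j) ((2 + 2 * α) ^ (j + 1) - s)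

private lemma le_infDist_aux {E : Set ℝ} (hE : E.Nonempty) {c x : ℝ}
    (h : ∀ y ∈ E, c ≤ dist x y) : c ≤ Metric.infDist x E := by
  by_contra hc
  push_neg at hc
  obtain ⟨y, hy, hd⟩ := (Metric.infDist_lt_iff hE).mp hc
  exact absurd (h y hy) (not_le.mpr hd)

private lemma exists_pow_interval {β : ℝ} (hβ : 2 < β) {s : ℝ} (hs : β ≤ s) :
    ∃ j : ℕ, 1 ≤ j ∧ β ^ j ≤ s ∧ s < β ^ (j + 1) := by
  have h1 : (1 : ℝ) < β := by linarith
  have hex : ∃ n : ℕ, s < β ^ n := pow_unbounded_of_one_lt s h1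
  classical
  set m := Nat.find hex with hm
  have hspec : s < β ^ m := Nat.find_spec hex
  have hm2 : 2 ≤ m := by
    by_contra h
    push_neg at h
    interval_cases m
    · simp at hspec; linarith
    · simp at hspec; linarith
  refine ⟨m - 1, by omega, ?_, ?_⟩
  · have := Nat.find_min hex (m := m - 1) (by omega)
    push_neg at this
    exact this
  · have : m - 1 + 1 = m := by omega
    rw [this]; exact hspec

private lemma exists_min_k {β : ℝ} (hβ : 2 < β) {l : ℝ} (hl : 0 ≤ l) (j₀ : ℕ) :
    ∃ k : ℕ, j₀ ≤ k ∧ 2 * l ≤ β ^ k * (β - 1) ∧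
      (k = j₀ ∨ β ^ (k - 1) * (β - 1) < 2 * l) := by
  classical
  have h1 : (1 : ℝ) < β := by linarith
  have hex : ∃ k : ℕ, j₀ ≤ k ∧ 2 * l ≤ β ^ k * (β - 1) := by
    obtain ⟨n, hn⟩ := pow_unbounded_of_one_lt (2 * l) h1
    refine ⟨max n j₀, le_max_right _ _, ?_⟩
    have h2 : β ^ n ≤ β ^ max n j₀ := pow_le_pow_right₀ (by linarith) (le_max_left _ _)
    have h3 : (0:ℝ) < β ^ max n j₀ := pow_pos (by linarith) _
    nlinarith
  set k := Nat.find hex with hk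
  obtain ⟨hk1, hk2⟩ := Nat.find_spec hex
  refine ⟨k, hk1, hk2, ?_⟩
  rcases eq_or_lt_of_le hk1 with h | h
  · exact Or.inl h.symm
  · right
    have := Nat.find_min hex (m := k - 1) (by omega)
    push_neg at this
    have hj : j₀ ≤ k - 1 := by omega
    exact this hj

set_option maxHeartbeats 1600000 in
/-- For every `α > 0`, the half-line round-trip trajectory `f_α`
serves every request within factor `max (2+2α) ((5+6α)/(1+2α))` of the offline
optimum: for every location `l ∈ [0,∞)` and arrival time `t ∈ ℕ`, the least
`s ≥ t` with `f_α s = l` exists and satisfies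
`s ≤ max (2+2α) ((5+6α)/(1+2α)) * max l t`. -/
theorem stmt_1 (α : ℝ) (hα : 0 < α) (f : ℝ → ℝ) (hf : IsRoundTripTraj α f)
    (l : ℝ) (hl : 0 ≤ l) (t : ℕ) :
    ∃ s : ℝ, IsLeast {u : ℝ | (t : ℝ) ≤ u ∧ f u = l} s ∧
      s ≤ max (2 + 2 * α) ((5 + 6 * α) / (1 + 2 * α)) * max l (t : ℝ) := by
  obtain ⟨h0, hjp⟩ := hf
  set β : ℝ := 2 + 2 * α with hβdef
  have hβ2 : 2 < β := by simp [hβdef]; linarith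
  have hβ1 : (1 : ℝ) < β := by linarith
  have hβ0 : (0 : ℝ) < β := by linarith
  set P : ℝ := (5 + 6 * α) / (1 + 2 * α) with hPdef
  set C : ℝ := max β P with hCdef
  have hP3 : 3 < P := by
    rw [hPdef, lt_div_iff₀ (by linarith : (0:ℝ) < 1 + 2*α)]
    linarith
  have hCβ : β ≤ C := le_max_left _ _
  have hCP : P ≤ C := le_max_right _ _
  have hC3 : 3 < C := lt_of_lt_of_le hP3 hCP
  set M : ℝ := max l (t : ℝ) with hMdef
  have hlM : l ≤ M := le_max_left _ _
  have htM : (t : ℝ) ≤ M := le_max_right _ _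
  have hM0 : 0 ≤ M := le_trans hl hlM
  have ht0 : (0 : ℝ) ≤ (t : ℝ) := Nat.cast_nonneg t
  -- value of f at trip-k ascending point
  have fval : ∀ k : ℕ, 1 ≤ k → 2 * l ≤ β ^ k * (β - 1) → f (β ^ k + l) = l := by
    intro k hk hlk
    have hpk : (0:ℝ) < β ^ k := pow_pos hβ0 _
    have hs1 : β ^ k ≤ β ^ k + l := by linarith
    have hs2 : β ^ k + l ≤ β ^ (k + 1) := by
      have : β ^ (k+1) = β ^ k * β := pow_succ β k
      nlinarith
    rw [hjp k hk _ hs1 hs2]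
    have : β ^ (k+1) = β ^ k * β := pow_succ β k
    have h2 : l ≤ β ^ (k+1) - (β ^ k + l) := by nlinarith
    simp only [add_sub_cancel_left]
    exact min_eq_left (by linarith)
  -- P-bound
  have Pbound : ∀ k : ℕ, 1 ≤ k → β ^ (k - 1) * (β - 1) < 2 * l → β ^ k + l ≤ P * l := by
    intro k hk h
    have hks : k - 1 + 1 = k := by omega
    have hpow : β ^ k = β ^ (k-1) * β := by rw [← pow_succ, hks]
    have h2 : β ^ k * (β - 1) ≤ 2 * β * l := by
      rw [hpow]
      nlinarith [pow_pos hβ0 (k-1)]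
    rw [hPdef, div_mul_eq_mul_div, le_div_iff₀ (by linarith : (0:ℝ) < 1 + 2*α)]
    have hβ1' : β - 1 = 1 + 2 * α := by rw [hβdef]; ring
    nlinarith
  have hC0 : (0:ℝ) ≤ C := by linarith
  have hPlCM : P * l ≤ C * M := mul_le_mul hCP hlM hl hC0
  have h3M : 3 * M ≤ C * M := mul_le_mul_of_nonneg_right (le_of_lt hC3) hM0
  have hβM : β * M ≤ C * M := mul_le_mul_of_nonneg_right hCβ hM0
  -- existence of a good witness
  have hwit : ∃ w : ℝ, ((t : ℝ) ≤ w ∧ f w = l) ∧ w ≤ C * M := by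
    rcases le_or_gt (t : ℝ) β with hcase | hcase
    · -- t ≤ β
      rcases le_or_gt (2 * l) β with hl2 | hl2
      · rcases le_or_gt (t : ℝ) l with htl | htl
        · -- ascending in trip 0
          refine ⟨l, ⟨htl, ?_⟩, ?_⟩
          · rw [h0 l hl (by linarith)]
            exact min_eq_left (by linarith)
          · linarith
        · rcases le_or_gt (t : ℝ) (β - l) with htb | htb
          · -- descending in trip 0
            have ht1 : (1 : ℝ) ≤ (t : ℝ) := by
              have : t ≠ 0 := by
                intro h; rw [h] at htl; simp at htl; linarith
              exact_mod_cast Nat.one_le_iff_ne_zero.mpr this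
            refine ⟨β - l, ⟨htb, ?_⟩, ?_⟩
            · rw [h0 (β - l) (by linarith) (by linarith), sub_sub_cancel]
              exact min_eq_right (by linarith)
            · have hM1 : (1:ℝ) ≤ M := by linarith
              have : β ≤ β * M := le_mul_of_one_le_right (le_of_lt hβ0) hM1
              linarith
          · -- β - l < t : next trips
            obtain ⟨k, hk1, hk2, hk3⟩ := exists_min_k hβ2 hl 1
            refine ⟨β ^ k + l, ⟨?_, fval k hk1 hk2⟩, ?_⟩
            · have hb : β ≤ β ^ k := le_self_pow₀ (le_of_lt hβ1) (by omega)
              linarith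
            · rcases hk3 with hk3 | hk3
              · -- k = 1, β < t + l ≤ 2M
                subst hk3
                rw [pow_one]
                linarith
              · have := Pbound k hk1 hk3
                linarith
      · -- β < 2l : next trips, P-bound always
        obtain ⟨k, hk1, hk2, hk3⟩ := exists_min_k hβ2 hl 1
        have hPb : β ^ k + l ≤ P * l := by
          rcases hk3 with hk3 | hk3
          · subst hk3
            refine Pbound 1 le_rfl ?_
            simp only [Nat.sub_self, pow_zero, one_mul]
            linarith
          · exact Pbound k hk1 hk3
        refine ⟨β ^ k + l, ⟨?_, fval k hk1 hk2⟩, ?_⟩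
        · have hb : β ≤ β ^ k := le_self_pow₀ (le_of_lt hβ1) (by omega)
          linarith
        · linarith
    · -- β < t : find trip containing t
      obtain ⟨j, hj1, hjt, hjt2⟩ := exists_pow_interval hβ2 (le_of_lt hcase)
      have ht1 : (1 : ℝ) ≤ (t : ℝ) := by linarith
      rcases le_or_gt (2 * l) (β ^ j * (β - 1)) with hlj | hlj
      · rcases le_or_gt (t : ℝ) (β ^ (j+1) - l) with htb | htb
        · -- descending in trip j
          refine ⟨β ^ (j+1) - l, ⟨htb, ?_⟩, ?_⟩
          · have hpj : β ^ (j+1) = β ^ j * β := pow_succ β j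
            rw [hjp j hj1 _ (by linarith) (by linarith)]
            have : β ^ (j+1) - l - β ^ j ≥ l := by nlinarith
            simp only [sub_sub_cancel]
            exact min_eq_right (by linarith)
          · have hpj : β ^ (j+1) = β ^ j * β := pow_succ β j
            have h1 : β ^ (j+1) ≤ β * (t:ℝ) := by
              have := mul_le_mul_of_nonneg_right hjt (le_of_lt hβ0)
              rw [hpj]; linarith [mul_comm β (t:ℝ)]
            have h2 : β * (t:ℝ) ≤ C * M := mul_le_mul hCβ htM ht0 hC0
            linarith
        · -- must go to later trips
          obtain ⟨k, hk1, hk2, hk3⟩ := exists_min_k hβ2 hl (j+1)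
          refine ⟨β ^ k + l, ⟨?_, fval k (by omega) hk2⟩, ?_⟩
          · have hb : β ^ (j+1) ≤ β ^ k := pow_le_pow_right₀ (le_of_lt hβ1) hk1
            linarith
          · rcases hk3 with hk3 | hk3
            · subst hk3
              linarith
            · have := Pbound k (by omega) hk3
              linarith
      · -- l above trip j's half-width
        obtain ⟨k, hk1, hk2, hk3⟩ := exists_min_k hβ2 hl (j+1)
        have hPb : β ^ k + l ≤ P * l := by
          rcases hk3 with hk3 | hk3
          · subst hk3
            refine Pbound (j+1) (by omega) ?_
            simp only [Nat.add_sub_cancel]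
            exact hlj
          · exact Pbound k (by omega) hk3
        refine ⟨β ^ k + l, ⟨?_, fval k (by omega) hk2⟩, ?_⟩
        · have hb : β ^ (j+1) ≤ β ^ k := pow_le_pow_right₀ (le_of_lt hβ1) hk1
          linarith
        · linarith
  -- f agrees with distance to the set E on [0,∞)
  set E : Set ℝ := insert 0 (Set.range fun j : ℕ => β ^ (j + 1)) with hEdef
  have hEne : E.Nonempty := ⟨0, Set.mem_insert _ _⟩
  have hmem_pow : ∀ j : ℕ, 1 ≤ j → β ^ j ∈ E := by
    intro j hj
    right
    refine ⟨j - 1, ?_⟩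
    show β ^ (j - 1 + 1) = β ^ j
    rw [Nat.sub_add_cancel hj]
  have hfeq : ∀ s : ℝ, 0 ≤ s → f s = Metric.infDist s E := by
    intro s hs
    rcases le_or_gt s β with hsβ | hsβ
    · rw [h0 s hs hsβ]
      apply le_antisymm
      · apply le_infDist_aux hEne
        intro y hy
        rcases hy with hy | ⟨i, hi⟩
        · rw [hy, Real.dist_eq, sub_zero, abs_of_nonneg hs]
          exact min_le_left _ _
        · have hyb : β ≤ β ^ (i+1) := by
            calc β = β ^ 1 := (pow_one β).symm
            _ ≤ β ^ (i+1) := pow_le_pow_right₀ (le_of_lt hβ1) (by omega)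
          rw [← hi, Real.dist_eq, abs_of_nonpos (by linarith)]
          refine le_trans (min_le_right _ _) (by linarith)
      · apply le_min
        · have h : Metric.infDist s E ≤ dist s 0 :=
            Metric.infDist_le_dist_of_mem (Set.mem_insert _ _)
          rwa [Real.dist_eq, sub_zero, abs_of_nonneg hs] at h
        · have h : Metric.infDist s E ≤ dist s (β ^ 1) :=
            Metric.infDist_le_dist_of_mem (hmem_pow 1 le_rfl)
          rw [pow_one] at h
          rwa [Real.dist_eq, abs_of_nonpos (by linarith), neg_sub] at h
    · obtain ⟨j, hj1, hjs, hjs2⟩ := exists_pow_interval hβ2 (le_of_lt hsβ)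
      rw [hjp j hj1 s hjs (le_of_lt hjs2)]
      apply le_antisymm
      · apply le_infDist_aux hEne
        intro y hy
        rcases hy with hy | ⟨i, hi⟩
        · rw [hy, Real.dist_eq, sub_zero, abs_of_nonneg hs]
          have : (0:ℝ) < β ^ j := pow_pos hβ0 _
          refine le_trans (min_le_left _ _) (by linarith)
        · rcases le_or_gt (i + 1) j with hij | hij
          · have : β ^ (i+1) ≤ β ^ j := pow_le_pow_right₀ (le_of_lt hβ1) hij
            rw [← hi, Real.dist_eq, abs_of_nonneg (by linarith)]
            refine le_trans (min_le_left _ _) (by linarith)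
          · have : β ^ (j+1) ≤ β ^ (i+1) := pow_le_pow_right₀ (le_of_lt hβ1) (by omega)
            rw [← hi, Real.dist_eq, abs_of_nonpos (by linarith)]
            refine le_trans (min_le_right _ _) (by linarith)
      · apply le_min
        · have h : Metric.infDist s E ≤ dist s (β ^ j) :=
            Metric.infDist_le_dist_of_mem (hmem_pow j hj1)
          rwa [Real.dist_eq, abs_of_nonneg (by linarith)] at h
        · have h : Metric.infDist s E ≤ dist s (β ^ (j+1)) :=
            Metric.infDist_le_dist_of_mem (hmem_pow (j+1) (by omega))
          rwa [Real.dist_eq, abs_of_nonpos (by linarith), neg_sub] at h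
  -- the set S
  set S : Set ℝ := {u : ℝ | (t : ℝ) ≤ u ∧ f u = l} with hSdef
  have hSalt : S = Set.Ici (t : ℝ) ∩ (fun s => Metric.infDist s E) ⁻¹' {l} := by
    ext u
    simp only [hSdef, Set.mem_setOf_eq, Set.mem_inter_iff, Set.mem_Ici, Set.mem_preimage,
      Set.mem_singleton_iff]
    constructor
    · rintro ⟨h1, h2⟩
      exact ⟨h1, by rw [← hfeq u (le_trans ht0 h1)]; exact h2⟩
    · rintro ⟨h1, h2⟩
      exact ⟨h1, by rw [hfeq u (le_trans ht0 h1)]; exact h2⟩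
  have hSclosed : IsClosed S := by
    rw [hSalt]
    exact isClosed_Ici.inter (IsClosed.preimage (Metric.continuous_infDist_pt E)
      isClosed_singleton)
  obtain ⟨w, hwS, hwB⟩ := hwit
  have hSne : S.Nonempty := ⟨w, hwS⟩
  have hSbdd : BddBelow S := ⟨(t : ℝ), fun u hu => hu.1⟩
  refine ⟨sInf S, ⟨hSclosed.csInf_mem hSne hSbdd, fun u hu => csInf_le hSbdd hu⟩, ?_⟩
  exact le_trans (csInf_le hSbdd hwS) hwB
end

section
/- For α = √3/2 (so β = 2+√3), the half-line round-trip trajectory f_α is (2+√3)-competitive: for every location l ∈ [0,∞) and every arrival time t ∈ ℕ, the least s ≥ t with f_{√3/2}(s) = l exists and satisfies s ≤ (2+√3) · max{l, t}. -/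
noncomputable section

namespace Stmt2Aux

/-- `b = β = 2 + √3`. -/
def b : ℝ := 2 + Real.sqrt 3

lemma sqrt3_ge_one : (1:ℝ) ≤ Real.sqrt 3 := by
  rw [show (1:ℝ) = Real.sqrt 1 by rw [Real.sqrt_one]]
  exact Real.sqrt_le_sqrt (by norm_num)

lemma hb3 : (3:ℝ) ≤ b := by unfold b; linarith [sqrt3_ge_one]
lemma hb0 : (0:ℝ) < b := by linarith [hb3]
lemma hb1 : (1:ℝ) ≤ b := by linarith [hb3]
lemma hb1' : (1:ℝ) < b := by linarith [hb3]

lemma hbsq : b ^ 2 = 4 * b - 1 := by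
  have h : Real.sqrt 3 ^ 2 = 3 := Real.sq_sqrt (by norm_num)
  unfold b; nlinarith [h]

/-- Segment boundaries: segment `j` is `[L j, L (j+1)]`. -/
def L : ℕ → ℝ := fun j => if j = 0 then 0 else b ^ j

lemma L_zero : L 0 = 0 := rfl
lemma L_succ (j : ℕ) : L (j + 1) = b ^ (j + 1) := by simp [L]

lemma L_nonneg (j : ℕ) : 0 ≤ L j := by
  unfold L; split
  · exact le_refl 0
  · exact pow_nonneg hb0.le _

lemma L_mono {m n : ℕ} (h : m ≤ n) : L m ≤ L n := by
  cases m with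
  | zero => exact L_nonneg n
  | succ p =>
    cases n with
    | zero => omega
    | succ q =>
      rw [L_succ, L_succ]
      exact pow_le_pow_right₀ hb1 (by omega)

/-- Key algebraic fact using `(β-1)^2 = 2β`: `(β-1)·(L(m+1) - L m) ≥ 2·L(m+1)`. -/
lemma claim (m : ℕ) : 2 * L (m + 1) ≤ (b - 1) * (L (m + 1) - L m) := by
  cases m with
  | zero =>
    rw [L_succ, L_zero, pow_one]
    nlinarith [hbsq, hb3]
  | succ p =>
    rw [L_succ (p+1), L_succ p]
    have hp : (0:ℝ) ≤ b ^ (p+1) := pow_nonneg hb0.le (p+1)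
    have hsq : b^2 - 2*b + 1 = 2*b := by have := hbsq; linarith
    have h1 : (b - 1) * (b^(p+1+1) - b^(p+1)) = b^(p+1) * (b^2 - 2*b + 1) := by ring
    have h2 : (2:ℝ) * b^(p+1+1) = b^(p+1) * (2*b) := by ring
    rw [h1, h2, hsq]

end Stmt2Aux

end

open Stmt2Aux in
/-- For `α = √3/2` (so `β = 2+√3`), the half-line round-trip
trajectory is `(2+√3)`-competitive: for every location `l ∈ [0,∞)` and every
arrival time `t ∈ ℕ`, the least `s ≥ t` with `f s = l` exists and satisfies
`s ≤ (2+√3) * max l t`. -/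
theorem stmt_2 (f : ℝ → ℝ) (hf : IsRoundTripTraj (Real.sqrt 3 / 2) f)
    (l : ℝ) (hl : 0 ≤ l) (t : ℕ) :
    ∃ s : ℝ, IsLeast {u : ℝ | (t : ℝ) ≤ u ∧ f u = l} s ∧
      s ≤ (2 + Real.sqrt 3) * max l (t : ℝ) := by
  classical
  have hβ : 2 + 2 * (Real.sqrt 3 / 2) = b := by unfold b; ring
  have hbb : (2 + Real.sqrt 3) = b := rfl
  rw [hbb]
  -- restated trajectory on segments
  have hseg : ∀ j : ℕ, ∀ u : ℝ, L j ≤ u → u ≤ L (j+1) →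
      f u = min (u - L j) (L (j+1) - u) := by
    intro j u h1 h2
    cases j with
    | zero =>
      rw [L_zero] at h1
      rw [L_succ, pow_one] at h2 ⊢
      rw [L_zero, sub_zero]
      have := hf.1 u h1 (by rw [hβ]; exact h2)
      rw [hβ] at this
      exact this
    | succ m =>
      rw [L_succ] at h1 ⊢
      rw [L_succ] at h2 ⊢
      have := hf.2 (m+1) (by omega) u (by rw [hβ]; exact h1) (by rw [hβ]; exact h2)
      rw [hβ] at this
      exact this
  -- every nonnegative real lies in some segment
  have hcover : ∀ u : ℝ, 0 ≤ u → ∃ j, L j ≤ u ∧ u ≤ L (j+1) := by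
    intro u hu
    have hex2 : ∃ n, u ≤ L (n+1) := by
      obtain ⟨n, hn⟩ := pow_unbounded_of_one_lt u hb1'
      exact ⟨n, by rw [L_succ]; exact le_trans hn.le (pow_le_pow_right₀ hb1 (Nat.le_succ n))⟩
    refine ⟨Nat.find hex2, ?_, Nat.find_spec hex2⟩
    rcases Nat.eq_zero_or_eq_succ_pred (Nat.find hex2) with h0 | hsu
    · rw [h0, L_zero]; exact hu
    · rw [hsu]
      have := Nat.find_min hex2 (m := Nat.find hex2 - 1) (by omega)
      push_neg at this
      have h1 : Nat.find hex2 - 1 + 1 = Nat.find hex2 := by omega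
      rw [h1] at this
      rw [← hsu]
      exact this.le
  -- minimal segment k where the request can be completed
  have hex : ∃ j, 2*l ≤ L (j+1) - L j ∧ (t:ℝ) ≤ L (j+1) - l := by
    obtain ⟨n, hn⟩ := pow_unbounded_of_one_lt (2*l + (t:ℝ)) hb1'
    have h1 : b^n ≤ b^(n+1) := pow_le_pow_right₀ hb1 (Nat.le_succ n)
    have h2 : b^n ≤ b^(n+1+1) := pow_le_pow_right₀ hb1 (by omega)
    have hp : (0:ℝ) ≤ b^(n+1) := pow_nonneg hb0.le (n+1)
    have ht0 : (0:ℝ) ≤ (t:ℝ) := Nat.cast_nonneg t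
    refine ⟨n+1, ?_, ?_⟩
    · rw [L_succ, L_succ]
      have key : 2 * b^(n+1) ≤ b^(n+1) * (b - 1) := by nlinarith [hp, hb3]
      have e2 : b^(n+1) * (b - 1) = b^(n+1+1) - b^(n+1) := by ring
      linarith [key, h1, hn, ht0, hl]
    · rw [L_succ]
      linarith [hn, h2]
  obtain ⟨k, hQk, hkmin⟩ : ∃ k, (2*l ≤ L (k+1) - L k ∧ (t:ℝ) ≤ L (k+1) - l) ∧
      ∀ m, m < k → ¬(2*l ≤ L (m+1) - L m ∧ (t:ℝ) ≤ L (m+1) - l) :=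
    ⟨Nat.find hex, Nat.find_spec hex, fun m hm => Nat.find_min hex hm⟩
  have hkle : ∀ j, (2*l ≤ L (j+1) - L j ∧ (t:ℝ) ≤ L (j+1) - l) → k ≤ j := by
    intro j hQj
    by_contra hc
    exact hkmin j (by omega) hQj
  have hLk := L_nonneg k
  have hLk1 := L_nonneg (k+1)
  have hMl : l ≤ max l (t:ℝ) := le_max_left _ _
  have hMt : (t:ℝ) ≤ max l (t:ℝ) := le_max_right _ _
  have hM0 : (0:ℝ) ≤ max l (t:ℝ) := le_trans hl hMl
  -- the lower bound argument, shared by both branches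
  have hlower : ∀ u : ℝ, (t:ℝ) ≤ u → f u = l →
      ∃ j, k ≤ j ∧ 2*l ≤ L (j+1) - L j ∧ (u = L j + l ∨ u = L (j+1) - l) := by
    intro u htu hfu
    have hu0 : (0:ℝ) ≤ u := le_trans (Nat.cast_nonneg t) htu
    obtain ⟨j, hj1, hj2⟩ := hcover u hu0
    have hm := hseg j u hj1 hj2
    rw [hfu] at hm
    rcases min_eq_iff.mp hm.symm with ⟨h1, h2⟩ | ⟨h1, h2⟩
    · have hQj : 2*l ≤ L (j+1) - L j ∧ (t:ℝ) ≤ L (j+1) - l := ⟨by linarith, by linarith⟩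
      exact ⟨j, hkle j hQj, hQj.1, Or.inl (by linarith)⟩
    · have hQj : 2*l ≤ L (j+1) - L j ∧ (t:ℝ) ≤ L (j+1) - l := ⟨by linarith, by linarith⟩
      exact ⟨j, hkle j hQj, hQj.1, Or.inr (by linarith)⟩
  by_cases hcase : (t:ℝ) ≤ L k + l
  · -- serve on the way out: s = L k + l
    refine ⟨L k + l, ⟨⟨hcase, ?_⟩, ?_⟩, ?_⟩
    · -- f (L k + l) = l
      have h1 : L k ≤ L k + l := by linarith
      have h2 : L k + l ≤ L (k+1) := by linarith [hQk.1]
      rw [hseg k _ h1 h2]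
      rw [show L k + l - L k = l by ring]
      exact min_eq_left (by linarith [hQk.1])
    · -- lower bound
      intro u hu
      obtain ⟨j, hkj, hjl, hju⟩ := hlower u hu.1 hu.2
      rcases Nat.lt_or_ge k j with hlt | hge
      · have : L (k+1) ≤ L j := L_mono (by omega)
        rcases hju with h | h <;> [skip; skip] <;>
          · have := L_nonneg j
            have h2 : l ≤ L (j+1) - L j - l := by linarith
            linarith [hQk.1, L_mono (show k + 1 ≤ j from by omega)]
      · have hkj' : k = j := by omega
        subst hkj'
        rcases hju with h | h
        · linarith
        · linarith [hQk.1]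
    · -- competitive bound
      cases k with
      | zero =>
        rw [L_zero, zero_add]
        nlinarith [hMl, hM0, hb3]
      | succ m =>
        have hnot := hkmin m (Nat.lt_succ_self m)
        by_cases hA : 2*l ≤ L (m+1) - L m
        · -- then t > L (m+1) - l, so L (m+1) < t + l
          have hB : ¬ ((t:ℝ) ≤ L (m+1) - l) := fun h => hnot ⟨hA, h⟩
          push_neg at hB
          nlinarith [hMl, hMt, hM0, hb3]
        · -- then l > (L(m+1) - L m)/2, so (b-1)·l > L(m+1)
          push_neg at hA
          have hc := claim m
          have hkey : L (m+1) < (b - 1) * l := by nlinarith [hc, hA, hb3]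
          nlinarith [hMl, hM0, hb3]
  · -- serve on the way back: s = L (k+1) - l
    push_neg at hcase
    refine ⟨L (k+1) - l, ⟨⟨hQk.2, ?_⟩, ?_⟩, ?_⟩
    · -- f (L (k+1) - l) = l
      have h1 : L k ≤ L (k+1) - l := by linarith [hQk.1]
      have h2 : L (k+1) - l ≤ L (k+1) := by linarith
      rw [hseg k _ h1 h2]
      rw [show L (k+1) - (L (k+1) - l) = l by ring]
      exact min_eq_right (by linarith [hQk.1])
    · -- lower bound
      intro u hu
      obtain ⟨j, hkj, hjl, hju⟩ := hlower u hu.1 hu.2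
      rcases Nat.lt_or_ge k j with hlt | hge
      · have hL : L (k+1) ≤ L j := L_mono (by omega)
        have := L_nonneg j
        rcases hju with h | h
        · linarith
        · linarith [L_mono (show j ≤ j + 1 from Nat.le_succ j)]
      · have hkj' : k = j := by omega
        subst hkj'
        rcases hju with h | h
        · -- u = L k + l < t ≤ u, contradiction
          exfalso; linarith [hu.1]
        · linarith
    · -- competitive bound: t > L k + l ≥ L k
      cases k with
      | zero =>
        rw [L_zero, zero_add] at hcase
        have ht1 : (1:ℝ) ≤ (t:ℝ) := by
          have : 0 < t := by exact_mod_cast lt_of_le_of_lt hl hcase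
          exact_mod_cast this
        rw [L_succ, pow_one]
        nlinarith [hMt, hM0, hb3]
      | succ m =>
        have hLs : L (m+1) ≤ (t:ℝ) := by linarith
        have he : L (m+1+1) = b * L (m+1) := by
          rw [L_succ, L_succ, pow_succ]; ring
        rw [he]
        have h1 : b * L (m+1) ≤ b * (t:ℝ) := by
          exact mul_le_mul_of_nonneg_left hLs hb0.le
        nlinarith [hMt, hM0, hb0]
end

section
/- Let α > 0, β = 2+2α, and define apex distances L_1 = (2+2α)/2 = 1+α and L_j = (2+2α)^{j−1}(1+2α)/2 for integers j ≥ 2. For the half-line round-trip trajectory f_α: (a) for every v with 0 ≤ v ≤ L_1, the least s ≥ 0 with f_α(s) = v is s = v; and (b) for every integer j ≥ 2 and every v with L_{j−1} < v ≤ L_j, the least s ≥ 0 with f_α(s) = v is s = β^{j−1} + v. -/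
/-- The apex distance of round trip `j`: `L 1 = (2+2α)/2` and
`L j = (2+2α)^(j-1) * (1+2α) / 2` for `j ≥ 2`. -/
noncomputable def apex (α : ℝ) (j : ℕ) : ℝ :=
  if j = 1 then (2 + 2 * α) / 2 else (2 + 2 * α) ^ (j - 1) * (1 + 2 * α) / 2

lemma rt_cover {α : ℝ} (hα : 0 < α) (s : ℝ) (hs : 2 + 2*α ≤ s) :
    ∃ j : ℕ, 1 ≤ j ∧ (2+2*α)^j ≤ s ∧ s ≤ (2+2*α)^(j+1) := by
  have hβ : (1:ℝ) < 2 + 2*α := by linarith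
  have hP : ∃ n : ℕ, s ≤ (2+2*α)^(n+1) := by
    obtain ⟨n, hn⟩ := pow_unbounded_of_one_lt s hβ
    exact ⟨n, le_trans hn.le (pow_le_pow_right₀ hβ.le (Nat.le_succ n))⟩
  classical
  have h1 := Nat.find_spec hP
  rcases Nat.eq_zero_or_pos (Nat.find hP) with h0 | h0
  · refine ⟨1, le_refl 1, by simpa using hs, ?_⟩
    rw [h0] at h1
    calc s ≤ (2+2*α)^1 := by simpa using h1
    _ ≤ (2+2*α)^2 := pow_le_pow_right₀ hβ.le one_le_two
  · refine ⟨Nat.find hP, h0, ?_, h1⟩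
    have h2 := Nat.find_min hP (Nat.sub_lt h0 one_pos)
    push_neg at h2
    have he : Nat.find hP - 1 + 1 = Nat.find hP := by omega
    rw [he] at h2; exact h2.le

lemma rt_f_le {α : ℝ} (hα : 0 < α) {f : ℝ → ℝ} (hf : IsRoundTripTraj α f)
    (s : ℝ) (hs : 0 ≤ s) : f s ≤ s := by
  by_cases h : s ≤ 2 + 2*α
  · rw [hf.1 s hs h]; exact min_le_left _ _
  · push_neg at h
    obtain ⟨j, hj1, hjl, hju⟩ := rt_cover hα s h.le
    rw [hf.2 j hj1 s hjl hju]
    have hp : (0:ℝ) ≤ (2+2*α)^j := by positivity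
    calc min (s - (2+2*α)^j) ((2+2*α)^(j+1) - s) ≤ s - (2+2*α)^j := min_le_left _ _
    _ ≤ s := by linarith

/-- first-visit times of the round-trip trajectory.
(a) For `0 ≤ v ≤ L_1 = 1+α`, the least `s ≥ 0` with `f s = v` is `s = v`.
(b) For `j ≥ 2` and `L_(j-1) < v ≤ L_j`, the least `s ≥ 0` with `f s = v`
is `s = (2+2α)^(j-1) + v`. -/
theorem stmt_5 (α : ℝ) (hα : 0 < α) (f : ℝ → ℝ) (hf : IsRoundTripTraj α f) :
    (apex α 1 = (2 + 2 * α) / 2 ∧ apex α 1 = 1 + α) ∧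
    (∀ v : ℝ, 0 ≤ v → v ≤ apex α 1 →
        IsLeast {s : ℝ | 0 ≤ s ∧ f s = v} v) ∧
    (∀ j : ℕ, 2 ≤ j → ∀ v : ℝ, apex α (j - 1) < v → v ≤ apex α j →
        IsLeast {s : ℝ | 0 ≤ s ∧ f s = v} ((2 + 2 * α) ^ (j - 1) + v)) := by
  have hβ1 : (1:ℝ) < 2 + 2*α := by linarith
  refine ⟨⟨by simp [apex], by simp [apex]; ring⟩, ?_, ?_⟩
  · intro v hv0 hv1
    have hv1' : v ≤ (2+2*α)/2 := by simpa [apex] using hv1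
    constructor
    · refine ⟨hv0, ?_⟩
      rw [hf.1 v hv0 (by linarith)]
      exact min_eq_left (by linarith)
    · rintro s ⟨hs0, hsv⟩
      have := rt_f_le hα hf s hs0
      linarith [hsv ▸ this]
  · intro j hj v hvl hvu
    obtain ⟨i, rfl⟩ := Nat.exists_eq_add_of_le hj
    have hidx : 2 + i - 1 = i + 1 := by omega
    rw [hidx] at hvl ⊢
    -- upper apex: apex α (2+i) = (2+2α)^(i+1) * (1+2α)/2
    have hau : apex α (2+i) = (2+2*α)^(i+1) * (1+2*α) / 2 := by
      have : 2 + i ≠ 1 := by omega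
      simp [apex, this, hidx]
    rw [hau] at hvu
    -- lower apex bound: (2+2α)/2 ≤ apex α (i+1), and for k ≤ i (k≥1),
    -- (2+2α)^k*(1+2α)/2 ≤ apex α (i+1)
    have hb0 : (0:ℝ) < 2 + 2*α := by linarith
    have hA1 : (2+2*α)/2 ≤ apex α (i+1) := by
      rcases Nat.eq_zero_or_pos i with h0 | h0
      · subst h0; simp [apex]
      · have : i + 1 ≠ 1 := by omega
        simp only [apex, this, if_false, Nat.add_sub_cancel]
        have h1 : (2+2*α) ≤ (2+2*α)^i := le_self_pow₀ hβ1.le (by omega)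
        nlinarith [pow_pos hb0 i]
    have hApow : ∀ k : ℕ, 1 ≤ k → k ≤ i → (2+2*α)^k * (1+2*α) / 2 ≤ apex α (i+1) := by
      intro k hk1 hki
      have : i + 1 ≠ 1 := by omega
      simp only [apex, this, if_false, Nat.add_sub_cancel]
      have h1 : (2+2*α)^k ≤ (2+2*α)^i := pow_le_pow_right₀ hβ1.le hki
      nlinarith
    have hpi : (0:ℝ) < (2+2*α)^(i+1) := pow_pos hb0 _
    have hpow2 : (2+2*α)^(i+2) = (2+2*α)^(i+1) * (2+2*α) := pow_succ _ _
    constructor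
    · -- membership : f ((2+2α)^(i+1) + v) = v
      have hv0 : 0 < v := lt_of_le_of_lt (le_trans (by linarith) hA1) hvl
      refine ⟨by positivity, ?_⟩
      have hl : (2+2*α)^(i+1) ≤ (2+2*α)^(i+1) + v := by linarith
      have hu : (2+2*α)^(i+1) + v ≤ (2+2*α)^(i+1+1) := by
        rw [show i+1+1 = i+2 from rfl, hpow2]; nlinarith
      rw [hf.2 (i+1) (by omega) _ hl hu]
      have : min ((2+2*α)^(i+1) + v - (2+2*α)^(i+1)) ((2+2*α)^(i+1+1) - ((2+2*α)^(i+1) + v))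
          = min v ((2+2*α)^(i+2) - (2+2*α)^(i+1) - v) := by ring_nf
      rw [this]
      refine min_eq_left ?_
      rw [hpow2]; nlinarith
    · -- lower bound
      rintro s ⟨hs0, hsv⟩
      by_cases h : s ≤ 2 + 2*α
      · exfalso
        rw [hf.1 s hs0 h] at hsv
        have h1 : min s ((2+2*α) - s) ≤ (2+2*α)/2 := by
          rcases le_total s ((2+2*α)-s) with hc | hc
          · rw [min_eq_left hc]; linarith
          · rw [min_eq_right hc]; linarith
        rw [hsv] at h1
        linarith
      · push_neg at h
        obtain ⟨k, hk1, hkl, hku⟩ := rt_cover hα s h.le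
        rw [hf.2 k hk1 s hkl hku] at hsv
        rcases lt_trichotomy k (i+1) with hki | hki | hki
        · exfalso
          have hki' : k ≤ i := by omega
          have h1 : min (s - (2+2*α)^k) ((2+2*α)^(k+1) - s) ≤ (2+2*α)^k * (1+2*α) / 2 := by
            have hpk : (2+2*α)^(k+1) = (2+2*α)^k * (2+2*α) := pow_succ _ _
            rcases le_total (s - (2+2*α)^k) ((2+2*α)^(k+1) - s) with hc | hc
            · rw [min_eq_left hc]; rw [hpk] at hc; nlinarith
            · rw [min_eq_right hc]; rw [hpk] at hc; nlinarith
          rw [hsv] at h1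
          have := hApow k hk1 hki'
          linarith
        · subst hki
          have h2 : v ≤ s - (2+2*α)^(i+1) := hsv ▸ min_le_left _ _
          linarith
        · have h3 : (2+2*α)^(i+2) ≤ (2+2*α)^k := pow_le_pow_right₀ hβ1.le (by omega)
          have h4 : (2+2*α)^(i+1) + v ≤ (2+2*α)^(i+2) := by
            rw [hpow2]; nlinarith
          linarith
end

section
/- For every α > 0 and every location l ∈ [0,∞), the first visit time of l by the half-line round-trip trajectory f_α, i.e. the least s ≥ 0 with f_α(s) = l, satisfies s ≤ ((5+6α)/(1+2α)) · l whenever l > 0 (and s = 0 when l = 0). In particular, every request (l, t) with arrival time t ≤ l is completed by f_α by time ((5+6α)/(1+2α)) · l. -/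
lemma key_first_visit (α : ℝ) (hα : 0 < α) (f : ℝ → ℝ) (hf : IsRoundTripTraj α f)
    (l : ℝ) (hl : 0 ≤ l) :
    ∃ s : ℝ, IsLeast {u : ℝ | 0 ≤ u ∧ f u = l} s ∧ l ≤ s ∧
      s ≤ (5 + 6 * α) / (1 + 2 * α) * l ∧ (l = 0 → s = 0) := by
  classical
  set β : ℝ := 2 + 2 * α with hβdef
  have hβ2 : (2 : ℝ) < β := by simp [hβdef]; linarith
  have hβ1 : (1 : ℝ) < β := by linarith
  have hβpos : (0 : ℝ) < β := by linarith
  rcases le_or_gt l (1 + α) with hcase | hcase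
  · -- first trip reaches l at time l
    refine ⟨l, ⟨⟨hl, ?_⟩, ?_⟩, le_refl l, ?_, fun h => h⟩
    · rw [hf.1 l hl (by linarith)]
      exact min_eq_left (by linarith)
    · rintro u ⟨hu0, hfu⟩
      by_contra hcon
      push_neg at hcon
      rw [hf.1 u hu0 (by linarith)] at hfu
      have := min_le_left u (β - u)
      rw [hfu] at this
      linarith
    · rw [div_mul_eq_mul_div, le_div_iff₀ (by linarith : (0:ℝ) < 1 + 2 * α)]
      nlinarith
  · -- l > 1 + α : need a later round trip
    have hex : ∃ k : ℕ, 2 * l ≤ β ^ k * (1 + 2 * α) := by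
      obtain ⟨n, hn⟩ := pow_unbounded_of_one_lt (2 * l) hβ1
      exact ⟨n, by nlinarith [pow_pos hβpos n]⟩
    set j := Nat.find hex with hjdef
    have hj : 2 * l ≤ β ^ j * (1 + 2 * α) := Nat.find_spec hex
    have hj1 : 1 ≤ j := by
      rcases Nat.eq_zero_or_pos j with h0 | h
      · exfalso
        have := hj
        rw [h0] at this
        simp at this
        linarith
      · exact h
    have hβjpos : (0 : ℝ) < β ^ j := pow_pos hβpos j
    have hjmin : ∀ k : ℕ, k < j → β ^ k * (1 + 2 * α) < 2 * l := by
      intro k hk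
      have := Nat.find_min hex hk
      push_neg at this
      exact this
    have hpj : β ^ (j + 1) = β ^ j * β := pow_succ β j
    refine ⟨β ^ j + l, ⟨⟨by positivity, ?_⟩, ?_⟩, by linarith, ?_, fun h => by linarith⟩
    · -- f (β^j + l) = l
      rw [hf.2 j hj1 (β ^ j + l) (by linarith) (by rw [hpj]; nlinarith)]
      have h1 : β ^ j + l - β ^ j = l := by ring
      rw [h1]
      exact min_eq_left (by rw [hpj]; nlinarith)
    · -- lower bound
      rintro u ⟨hu0, hfu⟩
      by_contra hcon
      push_neg at hcon
      rcases le_or_gt u β with hub | hub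
      · rw [hf.1 u hu0 hub] at hfu
        have h1 := min_le_left u (β - u)
        have h2 := min_le_right u (β - u)
        rw [hfu] at h1 h2
        linarith
      · -- find the round trip containing u
        have hexm : ∃ m : ℕ, u ≤ β ^ (m + 1) := by
          obtain ⟨n, hn⟩ := pow_unbounded_of_one_lt u hβ1
          exact ⟨n, le_of_lt (lt_of_lt_of_le hn (pow_le_pow_right₀ (le_of_lt hβ1) (Nat.le_succ n)))⟩
        set m := Nat.find hexm with hmdef
        have hm : u ≤ β ^ (m + 1) := Nat.find_spec hexm
        have hm1 : 1 ≤ m := by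
          rcases Nat.eq_zero_or_pos m with h0 | h
          · exfalso
            have := hm
            rw [h0] at this
            simp at this
            linarith
          · exact h
        have hmlow : β ^ m < u := by
          have hlt : m - 1 < m := Nat.sub_lt hm1 one_pos
          have := Nat.find_min hexm hlt
          push_neg at this
          have hms : m - 1 + 1 = m := Nat.succ_pred_eq_of_pos hm1
          rwa [hms] at this
        rw [hf.2 m hm1 u (le_of_lt hmlow) hm] at hfu
        have h1 := min_le_left (u - β ^ m) (β ^ (m + 1) - u)
        have h2 := min_le_right (u - β ^ m) (β ^ (m + 1) - u)
        rw [hfu] at h1 h2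
        rcases lt_or_ge m j with hmj | hmj
        · have := hjmin m hmj
          have hpm : β ^ (m + 1) = β ^ m * β := pow_succ β m
          rw [hpm] at h2
          nlinarith
        · have : β ^ j ≤ β ^ m := pow_le_pow_right₀ (le_of_lt hβ1) hmj
          linarith
    · -- the ratio bound: β^j + l ≤ (5+6α)/(1+2α) * l
      have hneed : β ^ j ≤ 2 * β / (1 + 2 * α) * l := by
        rcases Nat.lt_or_ge 1 j with hj2 | hj2
        · -- j ≥ 2 : minimality at j-1
          have hlt : j - 1 < j := Nat.sub_lt (by omega) one_pos
          have hmin := hjmin (j - 1) hlt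
          have hps : j - 1 + 1 = j := Nat.succ_pred_eq_of_pos hj1
          have hpow : β ^ j = β ^ (j - 1) * β := by
            rw [← pow_succ, hps]
          rw [div_mul_eq_mul_div, le_div_iff₀ (by linarith : (0:ℝ) < 1 + 2 * α), hpow]
          nlinarith [pow_pos hβpos (j - 1)]
        · have hj1' : j = 1 := by omega
          rw [hj1', pow_one, div_mul_eq_mul_div,
            le_div_iff₀ (by linarith : (0:ℝ) < 1 + 2 * α)]
          nlinarith
      have h5 : (5 + 6 * α) / (1 + 2 * α) = 2 * β / (1 + 2 * α) + 1 := by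
        rw [hβdef]
        field_simp
        ring
      rw [h5, add_mul, one_mul]
      linarith

/-- For every `α > 0` and every location `l ∈ [0,∞)`, the first
visit time of `l` by `f_α` (the least `s ≥ 0` with `f_α s = l`) exists and
satisfies `s ≤ ((5+6α)/(1+2α)) * l` when `l > 0`, and `s = 0` when `l = 0`.
In particular, every request `(l, t)` with arrival time `t ≤ l` is completed
by `f_α` by time `((5+6α)/(1+2α)) * l`. -/
theorem stmt_7 (α : ℝ) (hα : 0 < α) (f : ℝ → ℝ) (hf : IsRoundTripTraj α f)
    (l : ℝ) (hl : 0 ≤ l) :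
    (∃ s : ℝ, IsLeast {u : ℝ | 0 ≤ u ∧ f u = l} s ∧
        (0 < l → s ≤ (5 + 6 * α) / (1 + 2 * α) * l) ∧
        (l = 0 → s = 0)) ∧
    (∀ t : ℕ, (t : ℝ) ≤ l →
        ∃ s : ℝ, IsLeast {u : ℝ | (t : ℝ) ≤ u ∧ f u = l} s ∧
          s ≤ (5 + 6 * α) / (1 + 2 * α) * l) := by
  obtain ⟨s, hsleast, hls, hsbound, hs0⟩ := key_first_visit α hα f hf l hl
  constructor
  · exact ⟨s, hsleast, fun _ => hsbound, hs0⟩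
  · intro t ht
    refine ⟨s, ⟨⟨le_trans ht hls, hsleast.1.2⟩, ?_⟩, hsbound⟩
    rintro u ⟨htu, hfu⟩
    exact hsleast.2 ⟨le_trans (Nat.cast_nonneg t) htu, hfu⟩
end

section
/- For every α > 0, every location l ∈ [0,∞), and every arrival time t ∈ ℕ, the completion time of the request (l, t) under the half-line round-trip trajectory f_α, i.e. the least s ≥ t with f_α(s) = l, satisfies s ≤ max{(2+2α)·t, ((5+6α)/(1+2α))·l}. -/
section Aux

variable {α : ℝ} {f : ℝ → ℝ} {l : ℝ}

private lemma serve_asc0 (hα : 0 < α) (hf : IsRoundTripTraj α f) (hl : 0 ≤ l)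
    (h : 2 * l ≤ 2 + 2 * α) : f l = l := by
  rw [hf.1 l hl (by linarith)]
  exact min_eq_left (by linarith)

private lemma serve_desc0 (hα : 0 < α) (hf : IsRoundTripTraj α f) (hl : 0 ≤ l)
    (h : 2 * l ≤ 2 + 2 * α) : f (2 + 2 * α - l) = l := by
  rw [hf.1 (2 + 2 * α - l) (by linarith) (by linarith)]
  rw [show (2 + 2 * α) - (2 + 2 * α - l) = l by ring]
  exact min_eq_right (by linarith)

private lemma serve_ascJ (hα : 0 < α) (hf : IsRoundTripTraj α f) (hl : 0 ≤ l)
    (j : ℕ) (hj : 1 ≤ j) (h : 2 * l ≤ (2 + 2 * α) ^ j * (1 + 2 * α)) :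
    f ((2 + 2 * α) ^ j + l) = l := by
  have hp : (0:ℝ) < (2 + 2 * α) ^ j := pow_pos (by linarith) j
  have hs : (2 + 2 * α) ^ (j + 1) = (2 + 2 * α) ^ j * (2 + 2 * α) := pow_succ _ _
  rw [hf.2 j hj ((2 + 2 * α) ^ j + l) (by linarith) (by rw [hs]; nlinarith)]
  rw [show (2 + 2 * α) ^ j + l - (2 + 2 * α) ^ j = l by ring]
  refine min_eq_left ?_
  rw [hs]; nlinarith

private lemma serve_descJ (hα : 0 < α) (hf : IsRoundTripTraj α f) (hl : 0 ≤ l)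
    (j : ℕ) (hj : 1 ≤ j) (h : 2 * l ≤ (2 + 2 * α) ^ j * (1 + 2 * α)) :
    f ((2 + 2 * α) ^ (j + 1) - l) = l := by
  have hp : (0:ℝ) < (2 + 2 * α) ^ j := pow_pos (by linarith) j
  have hs : (2 + 2 * α) ^ (j + 1) = (2 + 2 * α) ^ j * (2 + 2 * α) := pow_succ _ _
  rw [hf.2 j hj ((2 + 2 * α) ^ (j + 1) - l) (by rw [hs]; nlinarith) (by linarith)]
  rw [show (2 + 2 * α) ^ (j + 1) - ((2 + 2 * α) ^ (j + 1) - l) = l by ring]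
  refine min_eq_right ?_
  rw [hs]; nlinarith

private lemma sol0 (hf : IsRoundTripTraj α f) {u : ℝ} (h0 : 0 ≤ u)
    (h1 : u ≤ 2 + 2 * α) (he : f u = l) : u = l ∨ u = 2 + 2 * α - l := by
  rw [hf.1 u h0 h1] at he
  rcases min_cases u ((2 + 2 * α) - u) with ⟨h, _⟩ | ⟨h, _⟩
  · exact Or.inl (h.symm.trans he)
  · right; have := h.symm.trans he; linarith

private lemma solJ (hf : IsRoundTripTraj α f) {u : ℝ} (k : ℕ) (hk : 1 ≤ k)
    (h0 : (2 + 2 * α) ^ k ≤ u) (h1 : u ≤ (2 + 2 * α) ^ (k + 1)) (he : f u = l) :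
    u = (2 + 2 * α) ^ k + l ∨ u = (2 + 2 * α) ^ (k + 1) - l := by
  rw [hf.2 k hk u h0 h1] at he
  rcases min_cases (u - (2 + 2 * α) ^ k) ((2 + 2 * α) ^ (k + 1) - u) with ⟨h, _⟩ | ⟨h, _⟩
  · left; have := h.symm.trans he; linarith
  · right; have := h.symm.trans he; linarith

/-- Bound conversion helper. -/
private lemma to_div (hα : 0 < α) {x : ℝ} (hx : x * (1 + 2 * α) ≤ (5 + 6 * α) * l) :
    x ≤ (5 + 6 * α) / (1 + 2 * α) * l := by
  rw [div_mul_eq_mul_div, le_div_iff₀ (by linarith : (0:ℝ) < 1 + 2 * α)]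
  linarith

/-- Case B: the request is beyond the reach of the round trip containing (or
bounding) the arrival time; serve it on the first round trip that reaches it. -/
private lemma candB (hα : 0 < α) (hf : IsRoundTripTraj α f) (hl : 0 ≤ l)
    (h2l : 1 + 2 * α < 2 * l) (T : ℝ)
    (hlow : ∀ j : ℕ, 1 ≤ j → 2 * l ≤ (2 + 2 * α) ^ j * (1 + 2 * α) → T ≤ (2 + 2 * α) ^ j) :
    ∃ s₀ : ℝ, T ≤ s₀ ∧ f s₀ = l ∧ s₀ ≤ (5 + 6 * α) / (1 + 2 * α) * l := by
  classical
  have hβ1 : (1:ℝ) < 2 + 2 * α := by linarith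
  have hex : ∃ n : ℕ, 2 * l ≤ (2 + 2 * α) ^ (n + 1) * (1 + 2 * α) := by
    obtain ⟨n, hn⟩ := pow_unbounded_of_one_lt (2 * l) hβ1
    refine ⟨n, ?_⟩
    have h1 : (2 + 2 * α) ^ n ≤ (2 + 2 * α) ^ (n + 1) :=
      pow_le_pow_right₀ hβ1.le (Nat.le_succ n)
    nlinarith [pow_pos (show (0:ℝ) < 2 + 2 * α by linarith) (n + 1)]
  set m' := Nat.find hex with hm'
  have hspec : 2 * l ≤ (2 + 2 * α) ^ (m' + 1) * (1 + 2 * α) := Nat.find_spec hex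
  have hp : (0:ℝ) < (2 + 2 * α) ^ (m' + 1) := pow_pos (by linarith) _
  refine ⟨(2 + 2 * α) ^ (m' + 1) + l, ?_, serve_ascJ hα hf hl (m' + 1) (by omega) hspec, ?_⟩
  · exact le_trans (hlow (m' + 1) (by omega) hspec) (by linarith)
  · have hmB : (2 + 2 * α) ^ (m' + 1) * (1 + 2 * α) ≤ 2 * l * (2 + 2 * α) := by
      rcases Nat.eq_zero_or_pos m' with h0 | h1
      · rw [h0]; rw [pow_one]; nlinarith
      · have hmin := Nat.find_min hex (show m' - 1 < m' by omega)
        push_neg at hmin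
        rw [show m' - 1 + 1 = m' by omega] at hmin
        have hs : (2 + 2 * α) ^ (m' + 1) = (2 + 2 * α) ^ m' * (2 + 2 * α) := pow_succ _ _
        rw [hs]
        nlinarith [pow_pos (show (0:ℝ) < 2 + 2 * α by linarith) m']
    exact to_div hα (by nlinarith)

/-- There is a service time `s₀ ≥ t` with `f s₀ = l` satisfying the bound. -/
private lemma exists_cand (hα : 0 < α) (hf : IsRoundTripTraj α f) (hl : 0 ≤ l) (t : ℕ) :
    ∃ s₀ : ℝ, (t : ℝ) ≤ s₀ ∧ f s₀ = l ∧
      s₀ ≤ max ((2 + 2 * α) * (t : ℝ)) ((5 + 6 * α) / (1 + 2 * α) * l) := by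
  have hβ1 : (1:ℝ) < 2 + 2 * α := by linarith
  by_cases htβ : (t : ℝ) ≤ 2 + 2 * α
  · by_cases hlpk : 2 * l ≤ 2 + 2 * α
    · by_cases h1 : (t : ℝ) ≤ l
      · exact ⟨l, h1, serve_asc0 hα hf hl hlpk,
          le_max_of_le_right (to_div hα (by nlinarith))⟩
      · push_neg at h1
        by_cases h2 : (t : ℝ) ≤ 2 + 2 * α - l
        · refine ⟨2 + 2 * α - l, h2, serve_desc0 hα hf hl hlpk, le_max_of_le_left ?_⟩
          have ht1 : (1:ℝ) ≤ (t : ℝ) := by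
            have ht0 : t ≠ 0 := by
              rintro rfl
              simp only [Nat.cast_zero] at h1
              linarith
            exact_mod_cast Nat.one_le_iff_ne_zero.mpr ht0
          nlinarith
        · push_neg at h2
          refine ⟨2 + 2 * α + l, by linarith, ?_, ?_⟩
          · have := serve_ascJ hα hf hl 1 le_rfl (by rw [pow_one]; nlinarith)
            rwa [pow_one] at this
          · by_cases h3 : 2 * l ≤ (1 + 2 * α) * (t : ℝ)
            · exact le_max_of_le_left (by nlinarith)
            · push_neg at h3
              exact le_max_of_le_right (to_div hα (by nlinarith))
    · push_neg at hlpk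
      have h2l : 1 + 2 * α < 2 * l := by linarith
      obtain ⟨s₀, hTs, hfs, hb⟩ := candB hα hf hl h2l (t : ℝ) (fun j hj _ => by
        calc (t : ℝ) ≤ 2 + 2 * α := htβ
        _ ≤ (2 + 2 * α) ^ j := le_self_pow₀ hβ1.le (by omega))
      exact ⟨s₀, hTs, hfs, le_max_of_le_right hb⟩
  · push_neg at htβ
    have ht1 : (1:ℝ) ≤ (t : ℝ) := by linarith
    obtain ⟨k, hk1, hk2⟩ := exists_nat_pow_near ht1 hβ1
    have hk0 : 1 ≤ k := by
      by_contra h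
      push_neg at h
      interval_cases k
      · rw [pow_one] at hk2; linarith
    have hpk : (0:ℝ) < (2 + 2 * α) ^ k := pow_pos (by linarith) k
    have hsucc : (2 + 2 * α) ^ (k + 1) = (2 + 2 * α) ^ k * (2 + 2 * α) := pow_succ _ _
    by_cases hlpk : 2 * l ≤ (2 + 2 * α) ^ k * (1 + 2 * α)
    · by_cases h1 : (t : ℝ) ≤ (2 + 2 * α) ^ k + l
      · refine ⟨(2 + 2 * α) ^ k + l, h1, serve_ascJ hα hf hl k hk0 hlpk, ?_⟩
        by_cases h3 : l ≤ (1 + 2 * α) * (t : ℝ)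
        · exact le_max_of_le_left (by nlinarith)
        · push_neg at h3
          exact le_max_of_le_right (to_div hα (by nlinarith))
      · push_neg at h1
        by_cases h2 : (t : ℝ) ≤ (2 + 2 * α) ^ (k + 1) - l
        · refine ⟨(2 + 2 * α) ^ (k + 1) - l, h2, serve_descJ hα hf hl k hk0 hlpk,
            le_max_of_le_left ?_⟩
          rw [hsucc]; nlinarith
        · push_neg at h2
          have hlk1 : 2 * l ≤ (2 + 2 * α) ^ (k + 1) * (1 + 2 * α) := by
            have : (2 + 2 * α) ^ k ≤ (2 + 2 * α) ^ (k + 1) :=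
              pow_le_pow_right₀ hβ1.le (Nat.le_succ k)
            nlinarith
          refine ⟨(2 + 2 * α) ^ (k + 1) + l, by linarith,
            serve_ascJ hα hf hl (k + 1) (by omega) hlk1, ?_⟩
          by_cases h3 : 2 * l ≤ (1 + 2 * α) * (t : ℝ)
          · exact le_max_of_le_left (by nlinarith)
          · push_neg at h3
            exact le_max_of_le_right (to_div hα (by nlinarith))
    · push_neg at hlpk
      have h2l : 1 + 2 * α < 2 * l := by nlinarith [one_le_pow₀ hβ1.le (n := k)]
      obtain ⟨s₀, hTs, hfs, hb⟩ := candB hα hf hl h2l (t : ℝ) (fun j hj hjl => by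
        have hkj : k < j := by
          by_contra hc
          push_neg at hc
          have : (2 + 2 * α) ^ j ≤ (2 + 2 * α) ^ k := pow_le_pow_right₀ hβ1.le hc
          nlinarith
        have : (2 + 2 * α) ^ (k + 1) ≤ (2 + 2 * α) ^ j := pow_le_pow_right₀ hβ1.le (by omega)
        linarith)
      exact ⟨s₀, hTs, hfs, le_max_of_le_right hb⟩

/-- Given any service time `s₀ ≥ t`, the set of service times `≥ t` has a
least element (which is `≤ s₀`). -/
private lemma exists_least (hα : 0 < α) (hf : IsRoundTripTraj α f) (hl : 0 ≤ l)
    (t : ℕ) {s₀ : ℝ} (hts : (t : ℝ) ≤ s₀) (hfs : f s₀ = l) :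
    ∃ s : ℝ, IsLeast {u : ℝ | (t : ℝ) ≤ u ∧ f u = l} s ∧ s ≤ s₀ := by
  have hβ1 : (1:ℝ) < 2 + 2 * α := by linarith
  obtain ⟨N, hN⟩ := pow_unbounded_of_one_lt s₀ hβ1
  set F : Set ℝ := insert l (insert (2 + 2 * α - l)
    (⋃ j ∈ Set.Iio (N + 1), ({(2 + 2 * α) ^ j + l, (2 + 2 * α) ^ (j + 1) - l} : Set ℝ)))
    with hF
  have hFfin : F.Finite := by
    refine Set.Finite.insert _ (Set.Finite.insert _ ?_)
    exact (Set.finite_Iio _).biUnion fun j _ => (Set.finite_singleton _).insert _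
  have hsub : {u : ℝ | (t : ℝ) ≤ u ∧ f u = l} ∩ Set.Iic s₀ ⊆ F := by
    rintro u ⟨⟨htu, hfu⟩, hus⟩
    have hu0 : (0:ℝ) ≤ u := le_trans (Nat.cast_nonneg t) htu
    by_cases huβ : u ≤ 2 + 2 * α
    · rcases sol0 hf hu0 huβ hfu with h | h
      · exact Set.mem_insert_iff.mpr (Or.inl h)
      · exact Set.mem_insert_iff.mpr (Or.inr (Set.mem_insert_iff.mpr (Or.inl h)))
    · push_neg at huβ
      obtain ⟨k, hk1, hk2⟩ := exists_nat_pow_near (le_of_lt (lt_trans hβ1 huβ)) hβ1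
      have hk0 : 1 ≤ k := by
        by_contra h
        push_neg at h
        interval_cases k
        · rw [pow_one] at hk2; linarith
      have hkN : k < N + 1 := by
        have : (2 + 2 * α) ^ k < (2 + 2 * α) ^ N :=
          lt_of_le_of_lt hk1 (lt_of_le_of_lt hus hN)
        have := (pow_lt_pow_iff_right₀ hβ1).mp this
        omega
      have hmem : u ∈ ⋃ j ∈ Set.Iio (N + 1),
          ({(2 + 2 * α) ^ j + l, (2 + 2 * α) ^ (j + 1) - l} : Set ℝ) := by
        rcases solJ hf k hk0 hk1 hk2.le hfu with h | h
        · exact Set.mem_biUnion hkN (Set.mem_insert_iff.mpr (Or.inl h))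
        · exact Set.mem_biUnion hkN (by simp [h])
      exact Set.mem_insert_iff.mpr (Or.inr (Set.mem_insert_iff.mpr (Or.inr hmem)))
  obtain ⟨a, haT, hmin⟩ := Set.exists_min_image _ id (hFfin.subset hsub)
    ⟨s₀, ⟨hts, hfs⟩, le_refl s₀⟩
  refine ⟨a, ⟨haT.1, fun u hu => ?_⟩, haT.2⟩
  by_cases h : u ≤ s₀
  · exact hmin u ⟨hu, h⟩
  · exact le_trans haT.2 (le_of_not_ge h)

end Aux

/-- For every `α > 0`, every location `l ∈ [0,∞)` and arrival
time `t ∈ ℕ`, the completion time of `(l, t)` under `f_α` (the least `s ≥ t`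
with `f_α s = l`) exists and satisfies
`s ≤ max ((2+2α) * t) (((5+6α)/(1+2α)) * l)`. -/
theorem stmt_8 (α : ℝ) (hα : 0 < α) (f : ℝ → ℝ) (hf : IsRoundTripTraj α f)
    (l : ℝ) (hl : 0 ≤ l) (t : ℕ) :
    ∃ s : ℝ, IsLeast {u : ℝ | (t : ℝ) ≤ u ∧ f u = l} s ∧
      s ≤ max ((2 + 2 * α) * (t : ℝ)) ((5 + 6 * α) / (1 + 2 * α) * l) := by
  obtain ⟨s₀, hts, hfs, hb⟩ := exists_cand hα hf hl t
  obtain ⟨s, hleast, hss⟩ := exists_least hα hf hl t hts hfs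
  exact ⟨s, hleast, le_trans hss hb⟩
end

section
/- Let α = √3/2 and β = 2+√3. For every integer k ≥ 2, every real Δ ≥ 0, and every real L ≥ β^{k−2}(1+√3)/2, one has (L + β^{k−1} + 4(k−1)Δ) / L ≤ (2+√3) + 4Δ. -/
lemma stmt_11_aux (s : ℝ) (hs1 : 1 ≤ s) (m : ℕ) :
    ((m : ℝ) + 1) ≤ (2 + s) ^ m * (1 + s) / 2 := by
  induction m with
  | zero => simp; linarith
  | succ n ih =>
    have hpow : (0:ℝ) ≤ (2 + s) ^ n * (1 + s) / 2 := by positivity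
    have h : (2 + s) ^ (n + 1) * (1 + s) / 2 = (2 + s) * ((2 + s) ^ n * (1 + s) / 2) := by
      ring
    rw [h]
    push_cast
    nlinarith [ih]

/-- With `β = 2+√3`, for every integer `k ≥ 2`, every real
`Δ ≥ 0`, and every real `L ≥ β^(k-2) * (1+√3) / 2`, one has
`(L + β^(k-1) + 4(k-1)Δ) / L ≤ (2+√3) + 4Δ`. -/
theorem stmt_11 (k : ℕ) (hk : 2 ≤ k) (Δ : ℝ) (hΔ : 0 ≤ Δ) (L : ℝ)
    (hL : (2 + Real.sqrt 3) ^ (k - 2) * (1 + Real.sqrt 3) / 2 ≤ L) :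
    (L + (2 + Real.sqrt 3) ^ (k - 1) + 4 * ((k : ℝ) - 1) * Δ) / L ≤
      (2 + Real.sqrt 3) + 4 * Δ := by
  set s := Real.sqrt 3 with hsdef
  have hs1 : 1 ≤ s := by
    rw [hsdef, show (1:ℝ) = Real.sqrt 1 by simp]
    exact Real.sqrt_le_sqrt (by norm_num)
  have hs2 : s ^ 2 = 3 := Real.sq_sqrt (by norm_num)
  obtain ⟨m, rfl⟩ : ∃ m, k = m + 2 := ⟨k - 2, by omega⟩
  simp only [Nat.add_sub_cancel] at hL ⊢
  have hkm1 : m + 2 - 1 = m + 1 := by omega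
  rw [hkm1]
  have hkey := stmt_11_aux s hs1 m
  have hmL : ((m : ℝ) + 1) ≤ L := le_trans hkey hL
  have hL0 : (0:ℝ) < L := by
    have : (0:ℝ) < (m : ℝ) + 1 := by positivity
    linarith
  rw [div_le_iff₀ hL0]
  have h1 : (2 + s) ^ (m + 1) ≤ (1 + s) * L := by
    have : (1 + s) * ((2 + s) ^ m * (1 + s) / 2) = (2 + s) ^ m * (2 + s) := by
      nlinarith [sq_nonneg ((2+s)^m)]
    calc (2 + s) ^ (m + 1) = (2 + s) ^ m * (2 + s) := by ring
      _ = (1 + s) * ((2 + s) ^ m * (1 + s) / 2) := this.symm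
      _ ≤ (1 + s) * L := by
          apply mul_le_mul_of_nonneg_left hL (by linarith)
  have h2 : 4 * ((↑(m + 2) : ℝ) - 1) * Δ ≤ 4 * Δ * L := by
    have : ((↑(m + 2) : ℝ) - 1) = (m : ℝ) + 1 := by push_cast; ring
    rw [this]
    have := mul_le_mul_of_nonneg_left hmL (by linarith : (0:ℝ) ≤ 4 * Δ)
    linarith
  nlinarith [h1, h2]
end

section
/- Let α = √3/2 and let f_{√3/2} be the half-line round-trip trajectory with this parameter. Let g : [0,∞) → ℝ be any 1-Lipschitz function with g(0) = 0 (a unit-or-slower-speed tour of the line starting at the origin), and consider the folded trajectory h = g ∘ f_{√3/2}, which retraces the tour g in round trips of the prescribed lengths. Then for every point p in the range of g and every arrival time t ∈ ℕ, letting τ be the least u ≥ 0 with g(u) = p (the arc-length position at which the tour first visits p), there exists s with s ≥ t, h(s) = p, and s ≤ (2+√3) · max{τ, t}; hence the least such s is at most (2+√3) · max{τ, t}. In particular, if the offline optimum for a request at p arriving at time t is at least max{τ, t} (as holds when g is the optimal offline tour of the perfectly predicted request locations), the folded trajectory serves every request within factor 2+√3 of the offline optimum. -/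
set_option maxHeartbeats 1000000 in
lemma hit_aux (f : ℝ → ℝ) (hf : IsRoundTripTraj (Real.sqrt 3 / 2) f)
    (τ T : ℝ) (h0 : 0 ≤ τ) (hτT : τ ≤ T) (hT : 1 ≤ T) :
    ∃ s, T ≤ s ∧ f s = τ ∧ s ≤ (2 + Real.sqrt 3) * T := by
  classical
  obtain ⟨hf1, hf2⟩ := hf
  have hs3 : Real.sqrt 3 ^ 2 = 3 := Real.sq_sqrt (by norm_num)
  have hs3nn : (0:ℝ) ≤ Real.sqrt 3 := Real.sqrt_nonneg 3
  have h1s : (1:ℝ) ≤ Real.sqrt 3 := by nlinarith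
  set β : ℝ := 2 + Real.sqrt 3 with hβdef
  clear_value β
  have hb : (2 : ℝ) + 2 * (Real.sqrt 3 / 2) = β := by rw [hβdef]; ring
  rw [hb] at hf1 hf2
  have hβ3 : (3:ℝ) ≤ β := by rw [hβdef]; linarith
  have hβ1 : (1:ℝ) < β := by linarith
  have hβpos : (0:ℝ) < β := by linarith
  have hβsq : β ^ 2 = 4 * β - 1 := by rw [hβdef]; nlinarith
  have hex : ∃ j : ℕ, T + τ ≤ β ^ (j + 1) := by
    obtain ⟨n, hn⟩ := pow_unbounded_of_one_lt (T + τ) hβ1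
    exact ⟨n, le_trans hn.le (pow_le_pow_right₀ hβ1.le (Nat.le_succ n))⟩
  obtain ⟨J, hJ, hJmin⟩ : ∃ j : ℕ, (T + τ ≤ β ^ (j + 1)) ∧
      ∀ k, k < j → ¬(T + τ ≤ β ^ (k + 1)) :=
    ⟨Nat.find hex, Nat.find_spec hex, fun k hk => Nat.find_min hex hk⟩
  rcases Nat.eq_zero_or_pos J with hJ0 | hJpos
  · -- first round trip
    rw [hJ0, pow_one] at hJ
    have hτβ : 2 * τ ≤ β := by linarith
    refine ⟨β - τ, by linarith, ?_, ?_⟩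
    · rw [hf1 (β - τ) (by linarith) (by linarith)]
      have : τ ≤ β - τ := by linarith
      simpa using min_eq_right (by linarith : β - (β - τ) ≤ β - τ)
    · nlinarith
  · have hJ1 : 1 ≤ J := hJpos
    have hmin : β ^ J < T + τ := by
      have := hJmin (J - 1) (by omega)
      push_neg at this
      have hJeq : J - 1 + 1 = J := by omega
      rwa [hJeq] at this
    have hpowpos : (0:ℝ) < β ^ J := pow_pos hβpos J
    have hsucc : β ^ (J + 1) = β ^ J * β := by rw [pow_succ]
    by_cases hap : 2 * τ ≤ β ^ J * (β - 1)
    · by_cases hasc : T ≤ β ^ J + τ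
      · -- ascending hit on trip J
        refine ⟨β ^ J + τ, hasc, ?_, ?_⟩
        · rw [hf2 J hJ1 (β ^ J + τ) (by linarith) (by rw [hsucc]; nlinarith)]
          rw [hsucc]
          have : β ^ J + τ - β ^ J = τ := by ring
          rw [this]
          exact min_eq_left (by nlinarith)
        · nlinarith
      · -- descending hit on trip J
        push_neg at hasc
        refine ⟨β ^ (J + 1) - τ, by linarith, ?_, ?_⟩
        · rw [hf2 J hJ1 (β ^ (J + 1) - τ) (by nlinarith [hsucc]) (by linarith)]
          have e : β ^ (J + 1) - (β ^ (J + 1) - τ) = τ := by ring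
          rw [e]
          exact min_eq_right (by nlinarith [hsucc])
        · have : β ^ (J + 1) < β * (T - τ) := by
            rw [hsucc]; nlinarith
          nlinarith
    · -- ascending hit on trip J+1
      push_neg at hap
      have hτhalf : 2 * τ ≤ β ^ (J + 1) := by linarith
      have hsucc2 : β ^ (J + 1 + 1) = β ^ (J + 1) * β := by rw [pow_succ]
      have hppos : (0:ℝ) < β ^ (J + 1) := pow_pos hβpos (J + 1)
      have hup : β ^ (J + 1) + τ ≤ β ^ (J + 1 + 1) := by nlinarith
      refine ⟨β ^ (J + 1) + τ, by linarith, ?_, ?_⟩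
      · rw [hf2 (J + 1) (Nat.le_add_left 1 J) (β ^ (J + 1) + τ) (by linarith) hup]
        have e : β ^ (J + 1) + τ - β ^ (J + 1) = τ := by ring
        rw [e]
        exact min_eq_left (by nlinarith)
      · -- β^{J+1}+τ ≤ β T using β^J(β-1) < 2τ and β² = 4β-1
        have h1 : β ^ (J + 1) * (β - 1) < 2 * β * τ := by
          rw [hsucc]; nlinarith
        nlinarith [mul_le_mul_of_nonneg_left hτT (by linarith : (0:ℝ) ≤ β * (β - 1))]

/-- Let `f` be the round-trip trajectory with `α = √3/2`, let
`g : ℝ → ℝ` be any 1-Lipschitz tour with `g 0 = 0`, and let `h = g ∘ f` be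
the folded trajectory retracing `g` in round trips.  If `τ` is the least
`u ≥ 0` with `g u = p` (so in particular `p` is in the range of `g`), then
for every arrival time `t ∈ ℕ` there exists `s ≥ t` with `h s = p` and
`s ≤ (2+√3) * max τ t`; hence the least such `s` is at most
`(2+√3) * max τ t`. -/
theorem stmt_12 (f : ℝ → ℝ) (hf : IsRoundTripTraj (Real.sqrt 3 / 2) f)
    (g : ℝ → ℝ) (hg : LipschitzWith 1 g) (hg0 : g 0 = 0)
    (p : ℝ) (t : ℕ) (τ : ℝ) (hτ : IsLeast {u : ℝ | 0 ≤ u ∧ g u = p} τ) :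
    (∃ s : ℝ, (t : ℝ) ≤ s ∧ (g ∘ f) s = p ∧
        s ≤ (2 + Real.sqrt 3) * max τ (t : ℝ)) ∧
    ∀ s₀ : ℝ, IsLeast {s : ℝ | (t : ℝ) ≤ s ∧ (g ∘ f) s = p} s₀ →
      s₀ ≤ (2 + Real.sqrt 3) * max τ (t : ℝ) := by
  obtain ⟨⟨hτ0, hgτ⟩, hlb⟩ := hτ
  have key : ∃ s : ℝ, (t : ℝ) ≤ s ∧ f s = τ ∧
      s ≤ (2 + Real.sqrt 3) * max τ (t : ℝ) := by
    by_cases h1 : 1 ≤ max τ (t : ℝ)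
    · obtain ⟨s, hs1, hs2, hs3⟩ := hit_aux f hf τ (max τ (t : ℝ)) hτ0
        (le_max_left _ _) h1
      exact ⟨s, le_trans (le_max_right _ _) hs1, hs2, hs3⟩
    · push_neg at h1
      have ht1 : (t : ℝ) < 1 := lt_of_le_of_lt (le_max_right τ _) h1
      have ht0 : (t : ℝ) = 0 := by
        have : t < 1 := by exact_mod_cast ht1
        have : t = 0 := by omega
        simp [this]
      have hτ1 : τ < 1 := lt_of_le_of_lt (le_max_left _ _) h1
      have hs3 : Real.sqrt 3 ^ 2 = 3 := Real.sq_sqrt (by norm_num)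
      have h1s : (1:ℝ) ≤ Real.sqrt 3 := by nlinarith [Real.sqrt_nonneg 3]
      obtain ⟨hf1, _⟩ := hf
      refine ⟨τ, by rw [ht0]; exact hτ0, ?_, ?_⟩
      · rw [hf1 τ hτ0 (by linarith)]
        exact min_eq_left (by linarith)
      · rw [ht0, max_eq_left hτ0]
        nlinarith
  obtain ⟨s, hs1, hs2, hs3⟩ := key
  have hmem : (t : ℝ) ≤ s ∧ (g ∘ f) s = p :=
    ⟨hs1, by simp only [Function.comp_apply, hs2, hgτ]⟩
  exact ⟨⟨s, hmem.1, hmem.2, hs3⟩, fun s₀ hs₀ => le_trans (hs₀.2 hmem) hs3⟩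
end
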